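/- arXiv:quant-ph/0403109 — 7 statements merged into one kernel-verified Lean document; each statement's English description precedes it below -/
import Mathlib

section
/- There exist constants c_0 > 0 and c_1 > 0 such that for all integers n, N with 1 ≤ n ≤ c_0·N, every randomized algorithm using n function values for computing the scalar mean S_N on the unit ball B_∞^N(ℝ) has worst-case expected error at least c_1·n^{−1/2}; that is, for every finite probability space (Ω, P), every choice of sample points t_1^ω,…,t_n^ω ∈ {0,…,N−1} and arbitrary maps φ^ω : ℝ^n → ℝ (ω ∈ Ω), one has sup over f with |f(j)| ≤ 1 of E_ω | S_N f − φ^ω(f(t_1^ω),…,f(t_n^ω)) | ≥ c_1·n^{−1/2}. -/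
/-!
Bakhvalov's averaging argument. Split `{0, …, N-1}` into the `2n` residue classes mod `2n`, each
of size at least `N / (4n)`, and test the algorithm on the `2^(2n)` functions that take a
constant sign `εᵢ` on the `i`-th class. For fixed `ω` the algorithm sees at most `n` classes;
flipping the signs on the unseen ones does not change its output but moves the mean by
`(2/N) ∑ sᵢ εᵢ` over unseen classes of sizes `sᵢ`, so on average over `ε` the error is at least
`(1/N) E|∑ sᵢ εᵢ| ≥ (1/N) (∑ sᵢ²)^(1/2) / √3 ≳ n^(-1/2)` by Khintchine's inequality. Averaging
over `ω` with weights `P` turns this into a lower bound for some single `f`.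
-/

open Finset

def rademacher (b : Bool) : ℝ := cond b 1 (-1)

@[simp] lemma rademacher_true : rademacher true = 1 := rfl
@[simp] lemma rademacher_false : rademacher false = -1 := rfl

@[simp] lemma rademacher_not (b : Bool) : rademacher (!b) = -rademacher b := by
  cases b <;> simp

lemma abs_rademacher_le_one (b : Bool) : |rademacher b| ≤ 1 := by cases b <;> simp

lemma sum_fun_bool_succ {M : Type*} [AddCommMonoid M] {m : ℕ} (F : (Fin (m + 1) → Bool) → M) :
    ∑ ε, F ε = ∑ ε : Fin m → Bool, (F (Fin.cons true ε) + F (Fin.cons false ε)) := by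
  rw [← (Fin.consEquiv fun _ => Bool).sum_comp, Fintype.sum_prod_type, Fintype.sum_bool,
    ← sum_add_distrib]
  rfl

lemma sum_mul_rademacher_cons {m : ℕ} (c : Fin (m + 1) → ℝ) (b : Bool) (ε : Fin m → Bool) :
    ∑ i, c i * rademacher ((Fin.cons b ε : Fin (m + 1) → Bool) i)
      = c 0 * rademacher b + ∑ i, c i.succ * rademacher (ε i) := by
  simp [Fin.sum_univ_succ]

theorem sum_sq_sum_mul_rademacher {m : ℕ} (c : Fin m → ℝ) :
    ∑ ε : Fin m → Bool, (∑ i, c i * rademacher (ε i)) ^ 2 = 2 ^ m * ∑ i, c i ^ 2 := by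
  induction m with
  | zero => simp
  | succ m ih =>
    rw [sum_fun_bool_succ, Fin.sum_univ_succ]
    simp only [sum_mul_rademacher_cons, rademacher_true, rademacher_false]
    have expand : ∀ x : ℝ, (c 0 * 1 + x) ^ 2 + (c 0 * -1 + x) ^ 2 = 2 * x ^ 2 + 2 * c 0 ^ 2 :=
      fun x => by ring
    simp only [expand, sum_add_distrib, ← mul_sum, sum_const, card_univ, Fintype.card_fun,
      Fintype.card_bool, Fintype.card_fin, nsmul_eq_mul, ih]
    push_cast
    ring

theorem sum_pow_four_sum_mul_rademacher_le {m : ℕ} (c : Fin m → ℝ) :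
    ∑ ε : Fin m → Bool, (∑ i, c i * rademacher (ε i)) ^ 4 ≤ 3 * 2 ^ m * (∑ i, c i ^ 2) ^ 2 := by
  induction m with
  | zero => simp
  | succ m ih =>
    have h2 := sum_sq_sum_mul_rademacher (fun i => c i.succ)
    have h4 := ih (fun i => c i.succ)
    rw [sum_fun_bool_succ, Fin.sum_univ_succ]
    simp only [sum_mul_rademacher_cons, rademacher_true, rademacher_false]
    set σ := ∑ i : Fin m, c i.succ ^ 2
    have expand : ∀ x : ℝ, (c 0 * 1 + x) ^ 4 + (c 0 * -1 + x) ^ 4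
        = 2 * x ^ 4 + 12 * c 0 ^ 2 * x ^ 2 + 2 * c 0 ^ 4 := fun x => by ring
    simp only [expand, sum_add_distrib, ← mul_sum, sum_const, card_univ, Fintype.card_fun,
      Fintype.card_bool, Fintype.card_fin, nsmul_eq_mul, h2]
    push_cast
    rw [pow_succ (2 : ℝ) m]
    nlinarith [mul_nonneg (pow_nonneg zero_le_two m : (0 : ℝ) ≤ 2 ^ m)
      (pow_nonneg (sq_nonneg (c 0)) 2)]

theorem sum_sq_pow_three_le_sq_sum_abs_mul_sum_pow_four {ι : Type*} (s : Finset ι) (x : ι → ℝ) :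
    (∑ i ∈ s, x i ^ 2) ^ 3 ≤ (∑ i ∈ s, |x i|) ^ 2 * ∑ i ∈ s, x i ^ 4 := by
  have h₁ : (∑ i ∈ s, x i ^ 2) ^ 2 ≤ (∑ i ∈ s, |x i|) * ∑ i ∈ s, |x i| ^ 3 :=
    sum_sq_le_sum_mul_sum_of_sq_le_mul s (fun i _ => abs_nonneg _)
      (fun i _ => by positivity) fun i _ => le_of_eq (by rw [← sq_abs (x i)]; ring)
  have h₂ : (∑ i ∈ s, |x i| ^ 3) ^ 2 ≤ (∑ i ∈ s, x i ^ 2) * ∑ i ∈ s, x i ^ 4 :=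
    sum_sq_le_sum_mul_sum_of_sq_le_mul s (fun i _ => sq_nonneg _) (fun i _ => by positivity)
      fun i _ => le_of_eq (by rw [show x i ^ 4 = (x i ^ 2) ^ 2 by ring, ← sq_abs (x i)]; ring)
  obtain hA | hA := (sum_nonneg fun i _ => sq_nonneg (x i) : 0 ≤ ∑ i ∈ s, x i ^ 2).eq_or_lt
  · rw [← hA, zero_pow three_ne_zero]
    exact mul_nonneg (sq_nonneg _) (sum_nonneg fun i _ => by positivity)
  refine le_of_mul_le_mul_left ?_ hA
  calc (∑ i ∈ s, x i ^ 2) * (∑ i ∈ s, x i ^ 2) ^ 3 = ((∑ i ∈ s, x i ^ 2) ^ 2) ^ 2 := by ring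
    _ ≤ ((∑ i ∈ s, |x i|) * ∑ i ∈ s, |x i| ^ 3) ^ 2 := pow_le_pow_left₀ (sq_nonneg _) h₁ 2
    _ = (∑ i ∈ s, |x i|) ^ 2 * (∑ i ∈ s, |x i| ^ 3) ^ 2 := by ring
    _ ≤ (∑ i ∈ s, |x i|) ^ 2 * ((∑ i ∈ s, x i ^ 2) * ∑ i ∈ s, x i ^ 4) := by gcongr
    _ = (∑ i ∈ s, x i ^ 2) * ((∑ i ∈ s, |x i|) ^ 2 * ∑ i ∈ s, x i ^ 4) := by ring

/-- Khintchine's inequality for `p = 1`, with constant `√3` coming from Hölder's inequality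
between the second and fourth moments. -/
theorem two_pow_mul_sqrt_sum_sq_le_sqrt_three_mul_sum_abs {m : ℕ} (c : Fin m → ℝ) :
    2 ^ m * √(∑ i, c i ^ 2) ≤ √3 * ∑ ε : Fin m → Bool, |∑ i, c i * rademacher (ε i)| := by
  set σ := ∑ i, c i ^ 2
  set S := ∑ ε : Fin m → Bool, |∑ i, c i * rademacher (ε i)|
  have hσ : 0 ≤ σ := sum_nonneg fun i _ => sq_nonneg _
  have hHoelder := sum_sq_pow_three_le_sq_sum_abs_mul_sum_pow_four univ
    fun ε : Fin m → Bool => ∑ i, c i * rademacher (ε i)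
  rw [sum_sq_sum_mul_rademacher] at hHoelder
  have hcube : (2 ^ m * σ) ^ 3 ≤ S ^ 2 * (3 * 2 ^ m * σ ^ 2) :=
    hHoelder.trans (by gcongr; exact sum_pow_four_sum_mul_rademacher_le c)
  have hsq : (2 ^ m) ^ 2 * σ ≤ 3 * S ^ 2 := by
    obtain hσ0 | hσ0 := hσ.eq_or_lt
    · rw [← hσ0, mul_zero]; positivity
    · refine le_of_mul_le_mul_left ?_ (by positivity : (0 : ℝ) < 2 ^ m * σ ^ 2)
      linarith [hcube]
  rw [← pow_le_pow_iff_left₀ (by positivity) (by positivity) two_ne_zero, mul_pow, mul_pow,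
    Real.sq_sqrt hσ, Real.sq_sqrt zero_le_three]
  exact hsq

theorem sum_abs_sub_perm_le_two_mul_sum_abs_sub {E : Type*} [Fintype E] (g : Equiv.Perm E)
    (u y : E → ℝ) (hy : ∀ ε, y (g ε) = y ε) :
    ∑ ε, |u ε - u (g ε)| ≤ 2 * ∑ ε, |u ε - y ε| :=
  calc ∑ ε, |u ε - u (g ε)| ≤ ∑ ε, (|u ε - y ε| + |u (g ε) - y (g ε)|) := by
        gcongr with ε
        rw [hy, abs_sub_comm (u (g ε))]
        exact abs_sub_le _ _ _
    _ = 2 * ∑ ε, |u ε - y ε| := by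
        rw [sum_add_distrib, Equiv.sum_comp g fun ε => |u ε - y ε|]
        ring

def flipOutside {κ : Type*} [DecidableEq κ] (A : Finset κ) (ε : κ → Bool) : κ → Bool :=
  fun i => if i ∈ A then ε i else !ε i

theorem flipOutside_involutive {κ : Type*} [DecidableEq κ] (A : Finset κ) :
    Function.Involutive (flipOutside A) := by
  intro ε
  funext i
  by_cases hi : i ∈ A <;> simp [flipOutside, hi]

theorem rademacher_flipOutside {κ : Type*} [DecidableEq κ] (A : Finset κ) (ε : κ → Bool)
    (i : κ) :
    rademacher (flipOutside A ε i) = if i ∈ A then rademacher (ε i) else -rademacher (ε i) := by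
  unfold flipOutside
  split_ifs <;> simp

theorem inv_mul_two_pow_mul_sqrt_le_sum_abs_mean_sub {N m : ℕ} (blk : Fin N → Fin m)
    (A : Finset (Fin m)) (y : (Fin m → Bool) → ℝ)
    (hy : ∀ ε ε', (∀ i ∈ A, ε i = ε' i) → y ε = y ε') :
    (N : ℝ)⁻¹ * (2 ^ m * √(∑ i ∈ Aᶜ, (#{j | blk j = i} : ℝ) ^ 2))
      ≤ √3 * ∑ ε : Fin m → Bool, |(N : ℝ)⁻¹ * ∑ j, rademacher (ε (blk j)) - y ε| := by
  set s : Fin m → ℝ := fun i => #{j | blk j = i}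
  set c : Fin m → ℝ := fun i => if i ∈ Aᶜ then s i else 0
  set u : (Fin m → Bool) → ℝ := fun ε => (N : ℝ)⁻¹ * ∑ j, rademacher (ε (blk j))
  have hu : ∀ ε, |u ε - u (flipOutside A ε)|
      = 2 * (N : ℝ)⁻¹ * |∑ i, c i * rademacher (ε i)| := by
    intro ε
    have hsum : ∑ j, (rademacher (ε (blk j)) - rademacher (flipOutside A ε (blk j)))
        = 2 * ∑ i, c i * rademacher (ε i) := by
      rw [← sum_fiberwise' univ blk fun i => rademacher (ε i) - rademacher (flipOutside A ε i),
        mul_sum]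
      refine sum_congr rfl fun i _ => ?_
      by_cases hi : i ∈ A
      · simp [rademacher_flipOutside, c, hi]
      · simp [rademacher_flipOutside, c, s, hi]; ring
    rw [← mul_sub, ← sum_sub_distrib, hsum, abs_mul, abs_mul, abs_of_nonneg (by positivity),
      abs_two, mul_left_comm, mul_assoc]
  have hc : ∑ i, c i ^ 2 = ∑ i ∈ Aᶜ, s i ^ 2 := by
    simp only [c, apply_ite (· ^ 2), zero_pow two_ne_zero, sum_ite_mem, univ_inter]
  have hy' : ∀ ε, y (flipOutside A ε) = y ε :=
    fun ε => hy _ _ fun i hi => by simp [flipOutside, hi]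
  have hsymm : ∑ ε, |u ε - u (flipOutside A ε)| ≤ 2 * ∑ ε, |u ε - y ε| :=
    sum_abs_sub_perm_le_two_mul_sum_abs_sub (flipOutside_involutive A).toPerm u y hy'
  calc (N : ℝ)⁻¹ * (2 ^ m * √(∑ i ∈ Aᶜ, s i ^ 2))
      ≤ (N : ℝ)⁻¹ * (√3 * ∑ ε : Fin m → Bool, |∑ i, c i * rademacher (ε i)|) := by
        rw [← hc]
        exact mul_le_mul_of_nonneg_left (two_pow_mul_sqrt_sum_sq_le_sqrt_three_mul_sum_abs c)
          (by positivity)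
    _ = √3 / 2 * ∑ ε, |u ε - u (flipOutside A ε)| := by
        simp only [hu, ← mul_sum]
        ring
    _ ≤ √3 * ∑ ε, |u ε - y ε| := by
        linarith [mul_le_mul_of_nonneg_left hsymm (by positivity : (0 : ℝ) ≤ √3 / 2)]

theorem card_fiber_ofNat {N m : ℕ} [NeZero m] (i : Fin m) :
    #{j : Fin N | Fin.ofNat m j = i} = Nat.count (· ≡ i [MOD m]) N := by
  rw [Nat.count_eq_card_filter_range, ← Nat.Iio_eq_range, ← Fin.map_valEmbedding_univ, filter_map,
    card_map]
  congr! 2 with j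
  simp [Fin.ext_iff, Nat.ModEq, Nat.mod_eq_of_lt i.isLt]

theorem div_two_mul_le_card_fiber_ofNat {N m : ℕ} [NeZero m] (hN : 2 * m ≤ N) (i : Fin m) :
    (N : ℝ) / (2 * m) ≤ #{j : Fin N | Fin.ofNat m j = i} := by
  have hm : 0 < m := Nat.pos_of_neZero m
  have hceil := Nat.count_modEq_card_eq_ceil N hm i
  rw [Nat.mod_eq_of_lt i.isLt] at hceil
  have hle : ((N : ℚ) - i) / m ≤ #{j : Fin N | Fin.ofNat m j = i} := by
    rw [card_fiber_ofNat]; exact_mod_cast hceil ▸ Int.le_ceil _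
  have hle' : ((N : ℝ) - i) / m ≤ #{j : Fin N | Fin.ofNat m j = i} := by exact_mod_cast hle
  refine le_trans ?_ hle'
  have : (2 * m : ℝ) ≤ N := by exact_mod_cast hN
  have : (i : ℝ) ≤ m := by exact_mod_cast i.isLt.le
  rw [div_le_div_iff₀ (by positivity) (by positivity)]
  nlinarith

theorem two_pow_mul_sqrt_card_compl_div_le_sum_abs_mean_sub {N m : ℕ} [NeZero m]
    (hN : 2 * m ≤ N) (A : Finset (Fin m)) (y : (Fin m → Bool) → ℝ)
    (hy : ∀ ε ε', (∀ i ∈ A, ε i = ε' i) → y ε = y ε') :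
    2 ^ m * √(#Aᶜ : ℝ) / (2 * √3 * m)
      ≤ ∑ ε : Fin m → Bool, |(N : ℝ)⁻¹ * ∑ j : Fin N, rademacher (ε (Fin.ofNat m j)) - y ε| := by
  have hm : (0 : ℝ) < m := by exact_mod_cast Nat.pos_of_neZero m
  have hN' : (2 * m : ℝ) ≤ N := by exact_mod_cast hN
  have hN0 : (0 : ℝ) < N := by linarith
  have hσ : #Aᶜ * ((N : ℝ) / (2 * m)) ^ 2
      ≤ ∑ i ∈ Aᶜ, (#{j : Fin N | Fin.ofNat m j = i} : ℝ) ^ 2 := by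
    rw [← nsmul_eq_mul]
    exact card_nsmul_le_sum _ _ _ fun i _ =>
      pow_le_pow_left₀ (by positivity) (div_two_mul_le_card_fiber_ofNat hN i) 2
  have hkey := inv_mul_two_pow_mul_sqrt_le_sum_abs_mean_sub (fun j : Fin N => Fin.ofNat m j) A y hy
  have hsqrt : √(#Aᶜ : ℝ) * ((N : ℝ) / (2 * m))
      ≤ √(∑ i ∈ Aᶜ, (#{j : Fin N | Fin.ofNat m j = i} : ℝ) ^ 2) := by
    rw [← Real.sqrt_sq (by positivity : (0 : ℝ) ≤ N / (2 * m)), ← Real.sqrt_mul (by positivity)]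
    exact Real.sqrt_le_sqrt hσ
  rw [div_le_iff₀ (by positivity)]
  calc 2 ^ m * √(#Aᶜ : ℝ)
        = (N : ℝ)⁻¹ * (2 ^ m * (√(#Aᶜ : ℝ) * ((N : ℝ) / (2 * m)))) * (2 * m) := by
        field_simp
    _ ≤ (N : ℝ)⁻¹ * (2 ^ m * √(∑ i ∈ Aᶜ, (#{j : Fin N | Fin.ofNat m j = i} : ℝ) ^ 2))
          * (2 * m) := by gcongr
    _ ≤ (√3 * ∑ ε : Fin m → Bool,
          |(N : ℝ)⁻¹ * ∑ j : Fin N, rademacher (ε (Fin.ofNat m j)) - y ε|) * (2 * m) := by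
        gcongr
    _ = _ := by ring

theorem inv_eight_mul_rpow_neg_half_le {n k : ℕ} (hn : 1 ≤ n) (hk : n ≤ k) :
    1 / 8 * (n : ℝ) ^ (-(1 / 2 : ℝ)) ≤ √(k : ℝ) / (2 * √3 * (2 * n : ℕ)) := by
  have hn' : (0 : ℝ) < n := by exact_mod_cast hn
  have hsqrt3 : √3 ≤ 2 := Real.sqrt_le_iff.mpr ⟨zero_le_two, by norm_num⟩
  rw [Real.rpow_neg hn'.le, ← Real.sqrt_eq_rpow, Nat.cast_mul, Nat.cast_two]
  calc 1 / 8 * (√(n : ℝ))⁻¹ = √(n : ℝ) / (2 * 2 * (2 * n)) := by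
        field_simp
        rw [Real.sq_sqrt hn'.le]
        norm_num
    _ ≤ √(k : ℝ) / (2 * √3 * (2 * n)) := by
        gcongr

theorem le_of_card_mul_le_sum_of_expectation_le {Ω E : Type*} [Fintype Ω] [Fintype E]
    [Nonempty E] (P : Ω → ℝ) (hP : ∀ ω, 0 ≤ P ω) (hP1 : ∑ ω, P ω = 1) (err : Ω → E → ℝ)
    {L b : ℝ} (hlow : ∀ ω, Fintype.card E * L ≤ ∑ ε, err ω ε)
    (hup : ∀ ε, ∑ ω, P ω * err ω ε ≤ b) : L ≤ b := by
  refine le_of_mul_le_mul_left ?_ (by exact_mod_cast Fintype.card_pos : (0 : ℝ) < Fintype.card E)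
  calc Fintype.card E * L = ∑ ω, P ω * (Fintype.card E * L) := by rw [← sum_mul, hP1, one_mul]
    _ ≤ ∑ ω, P ω * ∑ ε, err ω ε := by gcongr with ω; exact hP ω; exact hlow ω
    _ = ∑ ε, ∑ ω, P ω * err ω ε := by simp only [mul_sum]; exact sum_comm
    _ ≤ ∑ _ε : E, b := sum_le_sum fun ε _ => hup ε
    _ = Fintype.card E * b := by simp

/-- There are `c₀, c₁ > 0` such that for all `n, N` with
`1 ≤ n ≤ c₀·N`, every (nonadaptive) randomized algorithm using `n` function values —
given by a finite probability space `(Ω, P)`, sample points `t ω : Fin n → Fin N`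
and arbitrary maps `φ ω : ℝⁿ → ℝ` — has worst-case expected error on the unit ball
`B_∞^N(ℝ)` at least `c₁ · n^(-1/2)` for computing the mean `S_N f = (1/N) ∑ j, f j`:
any upper bound `b` for the expected errors over the unit ball satisfies
`b ≥ c₁ · n^(-1/2)`. -/
theorem mc_scalar_lower :
    ∃ c₀ c₁ : ℝ, 0 < c₀ ∧ 0 < c₁ ∧
      ∀ (n N : ℕ), 1 ≤ n → (n : ℝ) ≤ c₀ * N →
        ∀ (Ω : Type) [Fintype Ω] (P : Ω → ℝ),
          (∀ ω, 0 ≤ P ω) → (∑ ω, P ω = 1) →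
          ∀ (t : Ω → Fin n → Fin N) (φ : Ω → (Fin n → ℝ) → ℝ) (b : ℝ),
            (∀ f : Fin N → ℝ, (∀ j, |f j| ≤ 1) →
              ∑ ω, P ω * |(N : ℝ)⁻¹ * ∑ j, f j - φ ω (fun l => f (t ω l))| ≤ b) →
            c₁ * (n : ℝ) ^ (-(1 / 2 : ℝ)) ≤ b := by
  refine ⟨1 / 4, 1 / 8, by norm_num, by norm_num, ?_⟩
  intro n N hn hnN Ω _ P hP hP1 t φ b hb
  have : NeZero (2 * n) := ⟨by omega⟩
  have hN : 2 * (2 * n) ≤ N := by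
    have : ((2 * (2 * n) : ℕ) : ℝ) ≤ N := by push_cast; linarith
    exact_mod_cast this
  set f : (Fin (2 * n) → Bool) → Fin N → ℝ := fun ε j => rademacher (ε (Fin.ofNat _ j))
  refine le_of_card_mul_le_sum_of_expectation_le P hP hP1
    (fun ω ε => |(N : ℝ)⁻¹ * ∑ j, f ε j - φ ω (fun l => f ε (t ω l))|) (fun ω => ?_)
    (fun ε => hb (f ε) fun j => abs_rademacher_le_one _)
  set A := univ.image fun l => (Fin.ofNat (2 * n) (t ω l) : Fin (2 * n))
  have hA : n ≤ #Aᶜ := by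
    have : #A ≤ n := card_image_le.trans_eq (card_fin n)
    rw [card_compl, Fintype.card_fin]
    omega
  refine le_trans ?_ (two_pow_mul_sqrt_card_compl_div_le_sum_abs_mean_sub hN A _ fun ε ε' h => ?_)
  · rw [mul_div_assoc, Fintype.card_fun, Fintype.card_bool, Fintype.card_fin, Nat.cast_pow,
      Nat.cast_two]
    exact mul_le_mul_of_nonneg_left (inv_eight_mul_rpow_neg_half_le hn hA) (by positivity)
  · simp only [f]
    congr 1
    funext l
    rw [h _ (mem_image_of_mem _ (mem_univ l))]
end

section
/- Let 1 ≤ p ≤ 2 and let X be a normed real vector space satisfying the type-p inequality with constant c > 0. Then for all integers n ≥ 1 and N ≥ 1 and every f : {0,…,N−1} → X with ‖f(j)‖_X ≤ 1 for all j, the vector-valued Monte Carlo method satisfies N^{−n} · Σ_{(t_1,…,t_n) ∈ {0,…,N−1}^n} ‖ S_N f − (1/n) Σ_{l=1}^n f(t_l) ‖_X ≤ 4·c·n^{1/p−1}. -/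
/-!
Center `f` at its mean, `g = f - S_N f`; the error of the sample `t` is then `n⁻¹ ‖∑ₗ g (tₗ)‖`.
Since `g` has mean zero, the error only grows when an independent sample `t'` is subtracted
(`‖x‖ ≤ 𝔼 ‖x - Y‖` for `𝔼 Y = 0`). The joint law of `(t, t')` is invariant under exchanging
`tₗ` and `t'ₗ` for any set of indices `l`, so random signs can be put in front of
`g (tₗ) - g (t'ₗ)`, and the triangle inequality costs a factor `2`. For fixed `t`, the Rademacher
average of the vectors `g (tₗ)`, of norm at most `2`, is at most `2 c n^{1/p}` by the power-mean
inequality and the type-`p` inequality.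
-/

open Finset

section SignedSum

variable {ι M : Type*} [Fintype ι] [AddCommGroup M]

def signedSum (ε : ι → Bool) (x : ι → M) : M :=
  ∑ i, if ε i then x i else -x i

lemma signedSum_sub (ε : ι → Bool) (x y : ι → M) :
    signedSum ε (x - y) = signedSum ε x - signedSum ε y := by
  simp only [signedSum, ← sum_sub_distrib, Pi.sub_apply]
  refine sum_congr rfl fun i _ => ?_
  cases ε i <;> simp [neg_add_eq_sub]

end SignedSum

def HasRademacherType (X : Type*) [SeminormedAddCommGroup X] (p c : ℝ) : Prop :=
  ∀ (m : ℕ) (x : Fin m → X),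
    ((2 : ℝ) ^ m)⁻¹ * ∑ ε : Fin m → Bool, ‖signedSum ε x‖ ^ p ≤ c ^ p * ∑ i, ‖x i‖ ^ p

namespace HasRademacherType

variable {X : Type*} [SeminormedAddCommGroup X] {p c : ℝ}

theorem avg_norm_signedSum_le (h : HasRademacherType X p c) (hp : 1 ≤ p) (hc : 0 ≤ c)
    {m : ℕ} (x : Fin m → X) :
    ((2 : ℝ) ^ m)⁻¹ * ∑ ε : Fin m → Bool, ‖signedSum ε x‖ ≤ c * (∑ i, ‖x i‖ ^ p) ^ (1 / p) := by
  have hw : ∑ _ε : Fin m → Bool, ((2 : ℝ) ^ m)⁻¹ = 1 := by simp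
  calc ((2 : ℝ) ^ m)⁻¹ * ∑ ε : Fin m → Bool, ‖signedSum ε x‖
      = ∑ ε : Fin m → Bool, ((2 : ℝ) ^ m)⁻¹ * ‖signedSum ε x‖ := mul_sum _ _ _
    _ ≤ (∑ ε : Fin m → Bool, ((2 : ℝ) ^ m)⁻¹ * ‖signedSum ε x‖ ^ p) ^ (1 / p) :=
        Real.arith_mean_le_rpow_mean _ _ _ (fun _ _ => by positivity) hw
          (fun _ _ => norm_nonneg _) hp
    _ ≤ (c ^ p * ∑ i, ‖x i‖ ^ p) ^ (1 / p) := by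
        rw [← mul_sum]
        exact Real.rpow_le_rpow (by positivity) (h m x) (by positivity)
    _ = c * (∑ i, ‖x i‖ ^ p) ^ (1 / p) := by
        rw [Real.mul_rpow (by positivity) (by positivity), one_div,
          Real.rpow_rpow_inv hc (by positivity)]

theorem avg_norm_signedSum_le_of_norm_le (h : HasRademacherType X p c) (hp : 1 ≤ p)
    (hc : 0 ≤ c) {m : ℕ} {x : Fin m → X} {B : ℝ} (hB : 0 ≤ B) (hx : ∀ i, ‖x i‖ ≤ B) :
    ((2 : ℝ) ^ m)⁻¹ * ∑ ε : Fin m → Bool, ‖signedSum ε x‖ ≤ c * B * m ^ (1 / p) := by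
  have hp0 : 0 < p := by linarith
  have hsum : ∑ i, ‖x i‖ ^ p ≤ m * B ^ p := by
    calc ∑ i, ‖x i‖ ^ p ≤ ∑ _i : Fin m, B ^ p :=
          sum_le_sum fun i _ => Real.rpow_le_rpow (norm_nonneg _) (hx i) hp0.le
      _ = m * B ^ p := by simp
  calc ((2 : ℝ) ^ m)⁻¹ * ∑ ε : Fin m → Bool, ‖signedSum ε x‖
      ≤ c * (∑ i, ‖x i‖ ^ p) ^ (1 / p) := h.avg_norm_signedSum_le hp hc x
    _ ≤ c * (m * B ^ p) ^ (1 / p) := by gcongr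
    _ = c * B * m ^ (1 / p) := by
        rw [Real.mul_rpow (by positivity) (by positivity), one_div,
          Real.rpow_rpow_inv hB hp0.ne']
        ring

end HasRademacherType

section Symmetrization

variable {ι Ω : Type*} [Fintype ι] [DecidableEq ι] [Fintype Ω]

lemma sum_comp_eval_eq_zero {M : Type*} [AddCommMonoid M] {g : Ω → M} (hg : ∑ a, g a = 0)
    (l : ι) : ∑ t : ι → Ω, g (t l) = 0 := by
  refine (Fintype.sum_equiv (Equiv.funSplitAt l Ω) _ (fun q => g q.1) fun _ => rfl).trans ?_
  rw [Fintype.sum_prod_type, sum_comm]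
  simp [hg]

def swapUnless (ε : ι → Bool) : Equiv.Perm ((ι → Ω) × (ι → Ω)) :=
  Function.Involutive.toPerm
    (fun q => (fun l => if ε l then q.1 l else q.2 l, fun l => if ε l then q.2 l else q.1 l))
    fun q => by ext l <;> by_cases h : ε l <;> simp [h]

lemma sum_norm_sum_sub_eq_sum_norm_signedSum {X : Type*} [SeminormedAddCommGroup X]
    (ε : ι → Bool) (g : Ω → X) :
    ∑ q : (ι → Ω) × (ι → Ω), ‖∑ l, (g (q.1 l) - g (q.2 l))‖ =
      ∑ q : (ι → Ω) × (ι → Ω), ‖signedSum ε (fun l => g (q.1 l) - g (q.2 l))‖ := by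
  refine (Fintype.sum_equiv (swapUnless ε) _ _ fun q => ?_).symm
  congr 1
  refine sum_congr rfl fun l _ => ?_
  by_cases h : ε l <;> simp [swapUnless, Function.Involutive.toPerm, h]

lemma sum_norm_sum_sub_le {X : Type*} [SeminormedAddCommGroup X] (ε : ι → Bool) (g : Ω → X) :
    ∑ q : (ι → Ω) × (ι → Ω), ‖∑ l, (g (q.1 l) - g (q.2 l))‖ ≤
      2 * Fintype.card (ι → Ω) * ∑ t : ι → Ω, ‖signedSum ε (fun l => g (t l))‖ := by
  rw [sum_norm_sum_sub_eq_sum_norm_signedSum ε]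
  calc ∑ q : (ι → Ω) × (ι → Ω), ‖signedSum ε (fun l => g (q.1 l) - g (q.2 l))‖
      ≤ ∑ q : (ι → Ω) × (ι → Ω), (‖signedSum ε (fun l => g (q.1 l))‖ +
          ‖signedSum ε (fun l => g (q.2 l))‖) := by
        gcongr with q
        exact (congrArg norm (signedSum_sub ε (fun l => g (q.1 l)) (fun l => g (q.2 l)))).trans_le
          (norm_sub_le _ _)
    _ = 2 * Fintype.card (ι → Ω) * ∑ t : ι → Ω, ‖signedSum ε (fun l => g (t l))‖ := by
        rw [sum_add_distrib, Fintype.sum_prod_type, Fintype.sum_prod_type_right]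
        simp only [sum_const, card_univ, nsmul_eq_mul, ← mul_sum]
        ring

variable {X : Type*} [NormedAddCommGroup X] [NormedSpace ℝ X]

lemma card_mul_norm_le_sum_norm_sub (x : X) {Y : Ω → X} (hY : ∑ ω, Y ω = 0) :
    Fintype.card Ω * ‖x‖ ≤ ∑ ω, ‖x - Y ω‖ :=
  calc (Fintype.card Ω : ℝ) * ‖x‖ = ‖∑ ω, (x - Y ω)‖ := by
        rw [sum_sub_distrib, hY, sub_zero, sum_const, card_univ, ← Nat.cast_smul_eq_nsmul ℝ,
          norm_smul, Real.norm_natCast]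
    _ ≤ ∑ ω, ‖x - Y ω‖ := norm_sum_le _ _

lemma card_mul_sum_norm_sum_le {g : Ω → X} (hg : ∑ a, g a = 0) :
    Fintype.card (ι → Ω) * ∑ t : ι → Ω, ‖∑ l, g (t l)‖ ≤
      ∑ q : (ι → Ω) × (ι → Ω), ‖∑ l, (g (q.1 l) - g (q.2 l))‖ := by
  have hmean : ∑ t' : ι → Ω, ∑ l, g (t' l) = 0 := by
    rw [sum_comm]
    exact sum_eq_zero fun l _ => sum_comp_eval_eq_zero hg l
  rw [mul_sum, Fintype.sum_prod_type]
  gcongr with t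
  simpa only [sum_sub_distrib] using card_mul_norm_le_sum_norm_sub _ hmean

theorem sum_norm_sum_le_two_mul_sum_avg_norm_signedSum [Nonempty Ω] {g : Ω → X}
    (hg : ∑ a, g a = 0) :
    ∑ t : ι → Ω, ‖∑ l, g (t l)‖ ≤
      2 * ∑ t : ι → Ω,
        ((2 : ℝ) ^ Fintype.card ι)⁻¹ * ∑ ε : ι → Bool, ‖signedSum ε (fun l => g (t l))‖ := by
  set K : ℝ := (Fintype.card (ι → Ω) : ℝ)
  have hK : 0 < K := by positivity
  have hsigns : ∑ _ε : ι → Bool, ((2 : ℝ) ^ Fintype.card ι)⁻¹ = 1 := by simp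
  refine le_of_mul_le_mul_left ?_ hK
  calc K * ∑ t : ι → Ω, ‖∑ l, g (t l)‖
      ≤ ∑ q : (ι → Ω) × (ι → Ω), ‖∑ l, (g (q.1 l) - g (q.2 l))‖ := card_mul_sum_norm_sum_le hg
    _ = ∑ ε : ι → Bool, ((2 : ℝ) ^ Fintype.card ι)⁻¹ *
          ∑ q : (ι → Ω) × (ι → Ω), ‖∑ l, (g (q.1 l) - g (q.2 l))‖ := by
        rw [← sum_mul, hsigns, one_mul]
    _ ≤ ∑ ε : ι → Bool, ((2 : ℝ) ^ Fintype.card ι)⁻¹ *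
          (2 * K * ∑ t : ι → Ω, ‖signedSum ε (fun l => g (t l))‖) := by
        gcongr with ε
        exact sum_norm_sum_sub_le ε g
    _ = K * (2 * ∑ t : ι → Ω,
        ((2 : ℝ) ^ Fintype.card ι)⁻¹ * ∑ ε : ι → Bool, ‖signedSum ε (fun l => g (t l))‖) := by
        simp only [mul_sum]
        rw [sum_comm]
        refine sum_congr rfl fun t _ => sum_congr rfl fun ε _ => ?_
        ring

end Symmetrization

section Centering

variable {ι X : Type*} [Fintype ι] [NormedAddCommGroup X] [NormedSpace ℝ X]

lemma sum_sub_mean_eq_zero [Nonempty ι] (f : ι → X) :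
    ∑ i, (f i - (Fintype.card ι : ℝ)⁻¹ • ∑ j, f j) = 0 := by
  rw [sum_sub_distrib, sum_const, card_univ, ← Nat.cast_smul_eq_nsmul ℝ, smul_smul,
    mul_inv_cancel₀ (by positivity), one_smul, sub_self]

lemma norm_sub_mean_le {f : ι → X} {B : ℝ} (hf : ∀ i, ‖f i‖ ≤ B) (i : ι) :
    ‖f i - (Fintype.card ι : ℝ)⁻¹ • ∑ j, f j‖ ≤ 2 * B := by
  have : Nonempty ι := ⟨i⟩
  have hmean : ‖(Fintype.card ι : ℝ)⁻¹ • ∑ j, f j‖ ≤ B := by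
    rw [norm_smul, norm_inv, Real.norm_natCast, inv_mul_le_iff₀ (by positivity)]
    exact (norm_sum_le _ _).trans ((sum_le_sum fun j _ => hf j).trans_eq (by simp))
  linarith [norm_sub_le (f i) ((Fintype.card ι : ℝ)⁻¹ • ∑ j, f j), hf i]

lemma norm_sub_mean_eq [Nonempty ι] (m : X) (x : ι → X) :
    ‖m - (Fintype.card ι : ℝ)⁻¹ • ∑ i, x i‖ = (Fintype.card ι : ℝ)⁻¹ * ‖∑ i, (x i - m)‖ := by
  rw [← norm_neg, neg_sub, ← norm_smul_of_nonneg (by positivity), sum_sub_distrib, sum_const,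
    card_univ, ← Nat.cast_smul_eq_nsmul ℝ, smul_sub, smul_smul,
    inv_mul_cancel₀ (by positivity), one_smul]

end Centering

theorem mc_vector_upper_type_general
    (p : ℝ) (hp1 : 1 ≤ p)
    (X : Type*) [NormedAddCommGroup X] [NormedSpace ℝ X]
    (c : ℝ) (hc : 0 < c)
    (htype : ∀ (m : ℕ) (x : Fin m → X),
      ((2 : ℝ) ^ m)⁻¹ *
          ∑ ε : Fin m → Bool, ‖∑ i, (if ε i then x i else -x i)‖ ^ p
        ≤ c ^ p * ∑ i, ‖x i‖ ^ p)
    (n N : ℕ) (hn : 1 ≤ n) (hN : 1 ≤ N)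
    (f : Fin N → X) (hf : ∀ j, ‖f j‖ ≤ 1) :
    ((N : ℝ) ^ n)⁻¹ *
        ∑ t : Fin n → Fin N,
          ‖(N : ℝ)⁻¹ • ∑ j, f j - (n : ℝ)⁻¹ • ∑ l, f (t l)‖ ≤
      4 * c * (n : ℝ) ^ (1 / p - 1) := by
  have : NeZero n := ⟨by omega⟩
  have : NeZero N := ⟨by omega⟩
  set S : X := (N : ℝ)⁻¹ • ∑ j, f j
  set g : Fin N → X := fun j => f j - S
  have hg0 : ∑ j, g j = 0 := by simpa only [Fintype.card_fin] using sum_sub_mean_eq_zero f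
  have hg2 (j : Fin N) : ‖g j‖ ≤ 2 := by simpa using norm_sub_mean_le hf j
  have herr (t : Fin n → Fin N) :
      ‖S - (n : ℝ)⁻¹ • ∑ l, f (t l)‖ = (n : ℝ)⁻¹ * ‖∑ l, g (t l)‖ := by
    simpa only [Fintype.card_fin] using norm_sub_mean_eq S fun l => f (t l)
  have hrad (t : Fin n → Fin N) :
      ((2 : ℝ) ^ n)⁻¹ * ∑ ε : Fin n → Bool, ‖signedSum ε fun l => g (t l)‖ ≤
        c * 2 * n ^ (1 / p) :=
    HasRademacherType.avg_norm_signedSum_le_of_norm_le htype hp1 hc.le zero_le_two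
      fun l => hg2 (t l)
  have hsym := sum_norm_sum_le_two_mul_sum_avg_norm_signedSum (ι := Fin n) hg0
  rw [Fintype.card_fin] at hsym
  calc ((N : ℝ) ^ n)⁻¹ * ∑ t : Fin n → Fin N, ‖S - (n : ℝ)⁻¹ • ∑ l, f (t l)‖
      = (n : ℝ)⁻¹ * (((N : ℝ) ^ n)⁻¹ * ∑ t : Fin n → Fin N, ‖∑ l, g (t l)‖) := by
        simp only [herr, ← mul_sum]
        ring
    _ ≤ (n : ℝ)⁻¹ * (((N : ℝ) ^ n)⁻¹ * (2 * ∑ _t : Fin n → Fin N, c * 2 * n ^ (1 / p))) := by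
        gcongr
        exact hsym.trans (mul_le_mul_of_nonneg_left (sum_le_sum fun t _ => hrad t) zero_le_two)
    _ = 4 * c * (n : ℝ) ^ (1 / p - 1) := by
        rw [Real.rpow_sub_one (by positivity)]
        simp only [sum_const, card_univ, Fintype.card_fun, Fintype.card_fin, nsmul_eq_mul,
          Nat.cast_pow]
        field_simp
        ring

/-- Let `1 ≤ p ≤ 2` and let `X` be a normed real vector space
satisfying the type-`p` inequality with constant `c > 0`. Then for all `n, N ≥ 1`
and every `f : {0,…,N−1} → X` with `‖f j‖ ≤ 1`, the average (over all `n`-tuples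
of sample points) error of the vector-valued Monte Carlo method for the mean
`S_N f = (1/N) ∑ j, f j` is at most `4·c·n^(1/p−1)`. -/
theorem mc_vector_upper_type
    (p : ℝ) (hp1 : 1 ≤ p) (hp2 : p ≤ 2)
    (X : Type*) [NormedAddCommGroup X] [NormedSpace ℝ X]
    (c : ℝ) (hc : 0 < c)
    (htype : ∀ (m : ℕ) (x : Fin m → X),
      ((2 : ℝ) ^ m)⁻¹ *
          ∑ ε : Fin m → Bool, ‖∑ i, (if ε i then x i else -x i)‖ ^ p
        ≤ c ^ p * ∑ i, ‖x i‖ ^ p)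
    (n N : ℕ) (hn : 1 ≤ n) (hN : 1 ≤ N)
    (f : Fin N → X) (hf : ∀ j, ‖f j‖ ≤ 1) :
    ((N : ℝ) ^ n)⁻¹ *
        ∑ t : Fin n → Fin N,
          ‖(N : ℝ)⁻¹ • ∑ j, f j - (n : ℝ)⁻¹ • ∑ l, f (t l)‖ ≤
      4 * c * (n : ℝ) ^ (1 / p - 1) :=
  mc_vector_upper_type_general p hp1 X c hc htype n N hn hN f hf
end

section
/- For every p with 2 ≤ p < ∞ there is a constant c > 0 such that for all integers n, M, N ≥ 1 and every f : {0,…,N−1} → ℝ^M with ‖f(j)‖_{L_p^M} ≤ 1 for all j, the Monte Carlo method satisfies N^{−n} · Σ_{(t_1,…,t_n) ∈ {0,…,N−1}^n} ‖ S_N f − (1/n) Σ_{l=1}^n f(t_l) ‖_{L_p^M} ≤ c·n^{−1/2}; in particular the randomized error of mean computation in L_p^M with n samples is at most c·n^{−1/2}, uniformly in M and N. -/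
/-- The normalized `L_p^M` norm on `ℝ^M`: `‖x‖ = ((1/M) ∑ i, |x i|^p)^(1/p)`. -/
noncomputable def lpNorm (p : ℝ) (M : ℕ) (x : Fin M → ℝ) : ℝ :=
  ((M : ℝ)⁻¹ * ∑ i, |x i| ^ p) ^ (1 / p)

/-!
Coordinatewise, the Monte Carlo error is `1/n` times a sum of `n` independent centred samples.
Symmetrizing with an independent copy of the samples and averaging over random signs,
Khintchine's inequality (from the exponential moment bound `cosh x ≤ exp (x² / 2)`) bounds the
`p`-th moment of such a sum by `C_p n^{p/2}` times the `p`-th moment of one difference of two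
samples (Marcinkiewicz–Zygmund). Averaging over the coordinates gives `𝔼 ‖error‖^p ≤ C n^{-p/2}`,
and Jensen's inequality passes to the first moment.
-/

open Finset Real
open scoped BigOperators

theorem rpow_expect_le_expect_rpow {ι : Type*} [Fintype ι] {f : ι → ℝ} (hf : ∀ i, 0 ≤ f i)
    {p : ℝ} (hp : 1 ≤ p) : (𝔼 i, f i) ^ p ≤ 𝔼 i, f i ^ p := by
  cases isEmpty_or_nonempty ι
  · simp [zero_rpow (by linarith : p ≠ 0)]
  have hw : ∑ _i : ι, (Fintype.card ι : ℝ)⁻¹ = 1 := by simp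
  simpa [Fintype.expect_eq_sum_div_card, div_eq_inv_mul, mul_sum] using
    rpow_arith_mean_le_arith_mean_rpow univ (fun _ ↦ (Fintype.card ι : ℝ)⁻¹) f
      (fun _ _ ↦ by positivity) hw (fun i _ ↦ hf i) hp

theorem expect_rpow_inv_le_rpow_inv_expect {ι : Type*} [Fintype ι] {f : ι → ℝ}
    (hf : ∀ i, 0 ≤ f i) {p : ℝ} (hp : 1 ≤ p) : 𝔼 i, f i ^ p⁻¹ ≤ (𝔼 i, f i) ^ p⁻¹ := by
  have hp0 : p ≠ 0 := by positivity
  have hg : 0 ≤ 𝔼 i, f i ^ p⁻¹ := expect_nonneg fun i _ ↦ rpow_nonneg (hf i) _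
  calc 𝔼 i, f i ^ p⁻¹ = ((𝔼 i, f i ^ p⁻¹) ^ p) ^ p⁻¹ := (rpow_rpow_inv hg hp0).symm
    _ ≤ (𝔼 i, (f i ^ p⁻¹) ^ p) ^ p⁻¹ := by
        gcongr; exact rpow_expect_le_expect_rpow (fun i ↦ rpow_nonneg (hf i) _) hp
    _ = (𝔼 i, f i) ^ p⁻¹ := by simp only [rpow_inv_rpow (hf _) hp0]

theorem expect_comp_eval {ι κ : Type*} [Fintype ι] [DecidableEq ι] [Fintype κ] (f : κ → ℝ)
    (i : ι) : 𝔼 g : ι → κ, f (g i) = 𝔼 k, f k := by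
  rcases isEmpty_or_nonempty κ with hκ | hκ
  · have : IsEmpty (ι → κ) := ⟨fun g ↦ hκ.elim (g i)⟩
    simp
  obtain ⟨c, hc⟩ : ∃ c, Fintype.card ι = c + 1 :=
    Nat.exists_eq_succ_of_ne_zero (Fintype.card_pos_iff.2 ⟨i⟩).ne'
  have h := Fintype.sum_piFinset_apply f univ i
  rw [Fintype.piFinset_univ, hc, Nat.add_sub_cancel] at h
  rw [Fintype.expect_eq_sum_div_card, Fintype.expect_eq_sum_div_card, h, Fintype.card_fun, hc]
  simp only [nsmul_eq_mul, card_univ, Nat.cast_pow, pow_succ]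
  push_cast
  field_simp

theorem rpow_eq_sq_rpow_half {x : ℝ} (hx : 0 ≤ x) (p : ℝ) : x ^ p = (x ^ 2) ^ (p / 2) := by
  rw [← rpow_two, ← rpow_mul hx]; ring_nf

theorem sum_sq_rpow_half_le {ι : Type*} [Fintype ι] (b : ι → ℝ) {p : ℝ} (hp : 2 ≤ p) :
    (∑ l, b l ^ 2) ^ (p / 2) ≤ (Fintype.card ι : ℝ) ^ (p / 2) * 𝔼 l, |b l| ^ p := by
  have hsq : ∀ l, (b l ^ 2) ^ (p / 2) = |b l| ^ p := fun l ↦ by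
    rw [← sq_abs, ← rpow_eq_sq_rpow_half (abs_nonneg _)]
  rw [← Fintype.card_mul_expect, mul_rpow (by positivity) (expect_nonneg fun l _ ↦ sq_nonneg _)]
  gcongr
  simpa only [hsq] using
    rpow_expect_le_expect_rpow (p := p / 2) (fun l ↦ sq_nonneg (b l)) (by linarith)

def boolSign (b : Bool) : ℝ := if b then 1 else -1

section Khintchine

variable {ι : Type*} [Fintype ι] [DecidableEq ι]

theorem expect_exp_sum_boolSign (b : ι → ℝ) :
    𝔼 ε : ι → Bool, exp (∑ l, boolSign (ε l) * b l) = ∏ l, cosh (b l) := by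
  have hpair : ∀ l, ∑ v : Bool, exp (boolSign v * b l) = 2 * cosh (b l) := fun l ↦ by
    simp only [Fintype.sum_bool, boolSign, Bool.false_eq_true, ↓reduceIte, one_mul, neg_one_mul,
      cosh_eq]
    ring
  rw [Fintype.expect_eq_sum_div_card]
  simp_rw [exp_sum]
  rw [← Fintype.prod_sum fun l (v : Bool) ↦ exp (boolSign v * b l)]
  simp_rw [hpair]
  rw [prod_mul_distrib, prod_const, Fintype.card_fun, Fintype.card_bool, card_univ, Nat.cast_pow,
    Nat.cast_ofNat, mul_div_cancel_left₀ _ (by positivity)]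

theorem expect_exp_sum_boolSign_le (b : ι → ℝ) :
    𝔼 ε : ι → Bool, exp (∑ l, boolSign (ε l) * b l) ≤ exp ((∑ l, b l ^ 2) / 2) := by
  rw [expect_exp_sum_boolSign, sum_div, exp_sum]
  exact prod_le_prod (fun l _ ↦ (cosh_pos _).le) fun l _ ↦ cosh_le_exp_half_sq _

theorem abs_rpow_le_mul_exp_add_exp (y : ℝ) {p : ℝ} (hp : 0 < p) :
    |y| ^ p ≤ (p / exp 1) ^ p * (exp y + exp (-y)) := by
  have hy : |y| / p ≤ exp (|y| / p - 1) := by linarith [add_one_le_exp (|y| / p - 1)]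
  have habs : exp |y| ≤ exp y + exp (-y) := by
    rcases abs_choice y with h | h <;> rw [h] <;> linarith [exp_pos y, exp_pos (-y)]
  calc |y| ^ p = p ^ p * (|y| / p) ^ p := by
        rw [div_rpow (abs_nonneg y) hp.le]; field_simp
    _ ≤ p ^ p * exp (|y| / p - 1) ^ p := by gcongr
    _ = (p / exp 1) ^ p * exp |y| := by
        rw [← exp_mul, div_rpow hp.le (exp_pos 1).le, exp_one_rpow, sub_mul,
          div_mul_cancel₀ _ hp.ne', one_mul, exp_sub]
        ring
    _ ≤ (p / exp 1) ^ p * (exp y + exp (-y)) := by gcongr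

theorem expect_abs_sum_boolSign_rpow_le_mul_exp (a : ι → ℝ) {p s : ℝ} (hp : 0 < p)
    (hs : 0 < s) :
    𝔼 ε : ι → Bool, |∑ l, boolSign (ε l) * a l| ^ p ≤
      2 * (p / exp 1) ^ p / s ^ p * exp (s ^ 2 * (∑ l, a l ^ 2) / 2) := by
  have hpoint : ∀ ε : ι → Bool, |∑ l, boolSign (ε l) * a l| ^ p ≤ (p / exp 1) ^ p / s ^ p *
      (exp (∑ l, boolSign (ε l) * (s * a l)) + exp (∑ l, boolSign (ε l) * -(s * a l))) := by
    intro ε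
    have hneg : ∑ l, boolSign (ε l) * -(s * a l) = -∑ l, boolSign (ε l) * (s * a l) := by
      simp only [mul_neg, sum_neg_distrib]
    have hscale : |∑ l, boolSign (ε l) * (s * a l)| ^ p =
        s ^ p * |∑ l, boolSign (ε l) * a l| ^ p := by
      simp only [mul_left_comm _ s, ← mul_sum, abs_mul, abs_of_pos hs]
      exact mul_rpow hs.le (abs_nonneg _)
    rw [hneg, div_mul_eq_mul_div, le_div_iff₀ (by positivity), mul_comm, ← hscale]
    exact abs_rpow_le_mul_exp_add_exp _ hp
  have hsq : ∀ c : ℝ, ∑ l, (c * a l) ^ 2 = c ^ 2 * ∑ l, a l ^ 2 := fun c ↦ by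
    simp only [mul_pow, mul_sum]
  calc 𝔼 ε : ι → Bool, |∑ l, boolSign (ε l) * a l| ^ p
      ≤ 𝔼 ε : ι → Bool, (p / exp 1) ^ p / s ^ p *
          (exp (∑ l, boolSign (ε l) * (s * a l)) + exp (∑ l, boolSign (ε l) * -(s * a l))) :=
        expect_le_expect fun ε _ ↦ hpoint ε
    _ = (p / exp 1) ^ p / s ^ p * (𝔼 ε : ι → Bool, exp (∑ l, boolSign (ε l) * (s * a l)) +
          𝔼 ε : ι → Bool, exp (∑ l, boolSign (ε l) * -(s * a l))) := by
        rw [← mul_expect, expect_add_distrib]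
    _ ≤ (p / exp 1) ^ p / s ^ p * (exp (s ^ 2 * (∑ l, a l ^ 2) / 2) +
          exp (s ^ 2 * (∑ l, a l ^ 2) / 2)) := by
        gcongr
        · simpa only [hsq] using expect_exp_sum_boolSign_le fun l ↦ s * a l
        · simpa only [neg_mul_eq_neg_mul, hsq, neg_sq] using
            expect_exp_sum_boolSign_le fun l ↦ -s * a l
    _ = _ := by ring

theorem khintchine (a : ι → ℝ) {p : ℝ} (hp : 0 < p) :
    𝔼 ε : ι → Bool, |∑ l, boolSign (ε l) * a l| ^ p ≤
      2 * (p * (∑ l, a l ^ 2) / exp 1) ^ (p / 2) := by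
  rcases (sum_nonneg fun l _ ↦ sq_nonneg (a l) : 0 ≤ ∑ l, a l ^ 2).eq_or_lt with h0 | hpos
  · have ha : ∀ l, a l = 0 := fun l ↦
      pow_eq_zero_iff two_ne_zero |>.1 <| (sum_eq_zero_iff_of_nonneg fun l _ ↦ sq_nonneg (a l)).1
        h0.symm l (mem_univ l)
    simp [ha, zero_rpow hp.ne', zero_rpow (half_pos hp).ne']
  -- `s = √(p / ∑ a²)` minimises the bound of `expect_abs_sum_boolSign_rpow_le_mul_exp`
  have hs : 0 < √(p / ∑ l, a l ^ 2) := sqrt_pos.2 (div_pos hp hpos)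
  refine (expect_abs_sum_boolSign_rpow_le_mul_exp a hp hs).trans_eq ?_
  generalize ∑ l, a l ^ 2 = σ2 at hpos ⊢
  rw [sq_sqrt (div_pos hp hpos).le, div_mul_cancel₀ _ hpos.ne',
    rpow_eq_sq_rpow_half (sqrt_nonneg _), rpow_eq_sq_rpow_half (by positivity : 0 ≤ p / exp 1),
    sq_sqrt (div_pos hp hpos).le, ← exp_one_rpow (p / 2), mul_div_assoc,
    ← div_rpow (by positivity) (by positivity), mul_assoc,
    ← mul_rpow (by positivity) (by positivity)]
  congr 2
  field_simp

end Khintchine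

section Symmetrization

variable {ι K : Type*} [Fintype ι] [DecidableEq ι] [Fintype K] {p : ℝ}

theorem expect_abs_sum_rpow_eq_signed {σ : K → K} (hσ : Function.Involutive σ) {φ : K → ℝ}
    (hφ : ∀ k, φ (σ k) = -φ k) (ε : ι → Bool) :
    𝔼 u : ι → K, |∑ l, φ (u l)| ^ p = 𝔼 u : ι → K, |∑ l, boolSign (ε l) * φ (u l)| ^ p := by
  have hflip : Function.Involutive fun (u : ι → K) l ↦ if ε l then u l else σ (u l) := by
    intro u; funext l; by_cases h : ε l <;> simp [h, hσ (u l)]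
  refine (Fintype.expect_equiv hflip.toPerm _ _ fun u ↦ ?_).symm
  congr 2
  refine sum_congr rfl fun l _ ↦ ?_
  by_cases h : ε l <;> simp [h, boolSign, hφ]

theorem expect_abs_sum_rpow_le_of_antisymm {σ : K → K} (hσ : Function.Involutive σ)
    {φ : K → ℝ} (hφ : ∀ k, φ (σ k) = -φ k) (hp : 2 ≤ p) :
    𝔼 u : ι → K, |∑ l, φ (u l)| ^ p ≤
      2 * (p * Fintype.card ι / exp 1) ^ (p / 2) * 𝔼 k, |φ k| ^ p := by
  rcases isEmpty_or_nonempty ι with hι | hι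
  · simp [zero_rpow (by linarith : p ≠ 0), zero_rpow (by linarith : p / 2 ≠ 0)]
  calc 𝔼 u : ι → K, |∑ l, φ (u l)| ^ p
      = 𝔼 u : ι → K, 𝔼 ε : ι → Bool, |∑ l, boolSign (ε l) * φ (u l)| ^ p := by
        rw [expect_comm]
        simp only [← expect_abs_sum_rpow_eq_signed hσ hφ, Fintype.expect_const]
    _ ≤ 𝔼 u : ι → K, 2 * (p * Fintype.card ι / exp 1) ^ (p / 2) * 𝔼 l, |φ (u l)| ^ p := by
        refine expect_le_expect fun u _ ↦ (khintchine _ (by linarith)).trans ?_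
        rw [mul_div_right_comm p, mul_div_right_comm p, mul_rpow (by positivity) (by positivity),
          mul_rpow (by positivity) (by positivity), mul_assoc, mul_assoc _ (_ ^ (p / 2))]
        gcongr
        exact sum_sq_rpow_half_le _ hp
    _ = 2 * (p * Fintype.card ι / exp 1) ^ (p / 2) * 𝔼 k, |φ k| ^ p := by
        rw [← mul_expect, expect_comm]
        simp only [expect_comp_eval (fun k ↦ |φ k| ^ p), Fintype.expect_const]

theorem abs_sum_sub_expect_rpow_le (g : K → ℝ) (hp : 1 ≤ p) (t : ι → K) :
    |∑ l, (g (t l) - 𝔼 k, g k)| ^ p ≤ 𝔼 s : ι → K, |∑ l, (g (t l) - g (s l))| ^ p := by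
  have : Nonempty (ι → K) := ⟨t⟩
  have hmean : ∑ l, (g (t l) - 𝔼 k, g k) = 𝔼 s : ι → K, ∑ l, (g (t l) - g (s l)) := by
    simp only [expect_sum_comm, expect_sub_distrib, Fintype.expect_const, expect_comp_eval]
  calc |∑ l, (g (t l) - 𝔼 k, g k)| ^ p
      ≤ (𝔼 s : ι → K, |∑ l, (g (t l) - g (s l))|) ^ p := by
        rw [hmean]; gcongr; exact abs_expect_le _ _
    _ ≤ 𝔼 s : ι → K, |∑ l, (g (t l) - g (s l))| ^ p :=
        rpow_expect_le_expect_rpow (fun s ↦ abs_nonneg _) hp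

theorem expect_abs_sum_sub_expect_rpow_le (g : K → ℝ) (hp : 2 ≤ p) :
    𝔼 t : ι → K, |∑ l, (g (t l) - 𝔼 k, g k)| ^ p ≤
      2 * (p * Fintype.card ι / exp 1) ^ (p / 2) * 𝔼 jk : K × K, |g jk.1 - g jk.2| ^ p := by
  calc 𝔼 t : ι → K, |∑ l, (g (t l) - 𝔼 k, g k)| ^ p
      ≤ 𝔼 t : ι → K, 𝔼 s : ι → K, |∑ l, (g (t l) - g (s l))| ^ p :=
        expect_le_expect fun t _ ↦ abs_sum_sub_expect_rpow_le g (by linarith) t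
    _ = 𝔼 u : ι → K × K, |∑ l, (g (u l).1 - g (u l).2)| ^ p := by
        rw [← expect_product', univ_product_univ]
        exact Fintype.expect_equiv (Equiv.arrowProdEquivProdArrow ι (fun _ ↦ K) (fun _ ↦ K)).symm
          _ _ fun _ ↦ rfl
    _ ≤ _ := expect_abs_sum_rpow_le_of_antisymm (σ := Prod.swap) Prod.swap_swap
        (φ := fun jk ↦ g jk.1 - g jk.2) (fun _ ↦ (neg_sub _ _).symm) hp

end Symmetrization

theorem expect_abs_sub_rpow_le_two_rpow {I : Type*} [Fintype I] {x y : I → ℝ} {p : ℝ}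
    (hp : 1 ≤ p) (hx : 𝔼 i, |x i| ^ p ≤ 1) (hy : 𝔼 i, |y i| ^ p ≤ 1) :
    𝔼 i, |x i - y i| ^ p ≤ 2 ^ p := by
  calc 𝔼 i, |x i - y i| ^ p ≤ 𝔼 i, 2 ^ (p - 1) * (|x i| ^ p + |y i| ^ p) := by
        refine expect_le_expect fun i _ ↦ ?_
        have h := NNReal.rpow_add_le_mul_rpow_add_rpow ‖x i‖₊ ‖y i‖₊ hp
        have h' : (|x i| + |y i|) ^ p ≤ 2 ^ (p - 1) * (|x i| ^ p + |y i| ^ p) := by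
          exact_mod_cast h
        exact (rpow_le_rpow (abs_nonneg _) (abs_sub _ _) (by linarith)).trans h'
    _ = 2 ^ (p - 1) * (𝔼 i, |x i| ^ p + 𝔼 i, |y i| ^ p) := by
        rw [← mul_expect, expect_add_distrib]
    _ ≤ 2 ^ (p - 1) * 2 := by gcongr; linarith
    _ = 2 ^ p := by rw [← rpow_add_one two_ne_zero, sub_add_cancel]

theorem monte_carlo_expect_error_rpow_le {ι K I : Type*} [Fintype ι] [DecidableEq ι]
    [Nonempty ι] [Fintype K] [Nonempty K] [Fintype I] {p : ℝ} (hp : 2 ≤ p) (f : K → I → ℝ)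
    (hf : ∀ k, 𝔼 i, |f k i| ^ p ≤ 1) :
    𝔼 t : ι → K, 𝔼 i, |𝔼 k, f k i - 𝔼 l, f (t l) i| ^ p ≤
      2 * (4 * p / exp 1) ^ (p / 2) * (Fintype.card ι : ℝ) ^ (-(p / 2)) := by
  have hn : (0 : ℝ) < Fintype.card ι := by exact_mod_cast Fintype.card_pos
  have hcentre : ∀ (t : ι → K) i, |𝔼 k, f k i - 𝔼 l, f (t l) i| ^ p =
      (Fintype.card ι : ℝ)⁻¹ ^ p * |∑ l, (f (t l) i - 𝔼 k, f k i)| ^ p := fun t i ↦ by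
    have hsub : 𝔼 l, f (t l) i - 𝔼 k, f k i = 𝔼 l, (f (t l) i - 𝔼 k, f k i) := by
      rw [expect_sub_distrib, Fintype.expect_const]
    rw [abs_sub_comm, hsub, Fintype.expect_eq_sum_div_card, div_eq_inv_mul, abs_mul,
      abs_of_pos (inv_pos.2 hn), mul_rpow (inv_pos.2 hn).le (abs_nonneg _)]
  calc 𝔼 t : ι → K, 𝔼 i, |𝔼 k, f k i - 𝔼 l, f (t l) i| ^ p
      = (Fintype.card ι : ℝ)⁻¹ ^ p * 𝔼 i, 𝔼 t : ι → K, |∑ l, (f (t l) i - 𝔼 k, f k i)| ^ p := by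
        simp only [hcentre, ← mul_expect]; rw [expect_comm]
    _ ≤ (Fintype.card ι : ℝ)⁻¹ ^ p * 𝔼 i, 2 * (p * Fintype.card ι / exp 1) ^ (p / 2) *
          𝔼 jk : K × K, |f jk.1 i - f jk.2 i| ^ p := by
        gcongr with i
        exact expect_abs_sum_sub_expect_rpow_le (fun k ↦ f k i) hp
    _ = (Fintype.card ι : ℝ)⁻¹ ^ p * (2 * (p * Fintype.card ι / exp 1) ^ (p / 2)) *
          𝔼 jk : K × K, 𝔼 i, |f jk.1 i - f jk.2 i| ^ p := by
        rw [← mul_expect, expect_comm]; ring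
    _ ≤ (Fintype.card ι : ℝ)⁻¹ ^ p * (2 * (p * Fintype.card ι / exp 1) ^ (p / 2)) * 2 ^ p := by
        gcongr
        exact expect_le univ_nonempty fun jk _ ↦
          expect_abs_sub_rpow_le_two_rpow (by linarith) (hf jk.1) (hf jk.2)
    _ = 2 * (4 * p / exp 1) ^ (p / 2) * (Fintype.card ι : ℝ) ^ (-(p / 2)) := by
        rw [rpow_eq_sq_rpow_half (inv_pos.2 hn).le, rpow_eq_sq_rpow_half zero_le_two p,
          rpow_neg hn.le, ← inv_rpow hn.le, mul_assoc, mul_comm, mul_assoc, mul_assoc,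
          ← mul_rpow (by positivity) (by positivity), ← mul_rpow (by positivity) (by positivity),
          mul_assoc, ← mul_rpow (by positivity) (by positivity)]
        congr 2
        field_simp
        ring

theorem lpNorm_eq_expect (p : ℝ) {M : ℕ} (x : Fin M → ℝ) :
    lpNorm p M x = (𝔼 i, |x i| ^ p) ^ p⁻¹ := by
  rw [lpNorm, Fintype.expect_eq_sum_div_card, Fintype.card_fin, one_div, div_eq_inv_mul (∑ i, _)]

theorem lpNorm_le_one_iff {p : ℝ} (hp : 0 < p) {M : ℕ} (x : Fin M → ℝ) :
    lpNorm p M x ≤ 1 ↔ 𝔼 i, |x i| ^ p ≤ 1 := by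
  rw [lpNorm_eq_expect,
    rpow_inv_le_iff_of_pos (expect_nonneg fun i _ ↦ by positivity) zero_le_one hp, one_rpow]

/-- For every `2 ≤ p < ∞` there is a constant `c > 0` such that for
all `n, M, N ≥ 1` and every `f : {0,…,N−1} → ℝ^M` with `‖f j‖_{L_p^M} ≤ 1`, the
average (over all `n`-tuples of sample points) `L_p^M` error of the Monte Carlo
method for the mean `S_N f = (1/N) ∑ j, f j` is at most `c·n^(-1/2)`,
uniformly in `M` and `N`. -/
theorem mc_upper_lp_high (p : ℝ) (hp : 2 ≤ p) :
    ∃ c : ℝ, 0 < c ∧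
      ∀ (n M N : ℕ), 1 ≤ n → 1 ≤ M → 1 ≤ N →
        ∀ f : Fin N → Fin M → ℝ, (∀ j, lpNorm p M (f j) ≤ 1) →
          ((N : ℝ) ^ n)⁻¹ *
              ∑ t : Fin n → Fin N,
                lpNorm p M ((N : ℝ)⁻¹ • ∑ j, f j - (n : ℝ)⁻¹ • ∑ l, f (t l))
            ≤ c * (n : ℝ) ^ (-(1 / 2 : ℝ)) := by
  refine ⟨(2 * (4 * p / exp 1) ^ (p / 2)) ^ p⁻¹, by positivity, fun n M N hn _ hN f hf ↦ ?_⟩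
  have : Nonempty (Fin n) := ⟨⟨0, hn⟩⟩
  have : Nonempty (Fin N) := ⟨⟨0, hN⟩⟩
  have hmoment := monte_carlo_expect_error_rpow_le (ι := Fin n) hp f
    fun j ↦ (lpNorm_le_one_iff (by linarith) _).1 (hf j)
  rw [Fintype.card_fin] at hmoment
  calc ((N : ℝ) ^ n)⁻¹ * ∑ t : Fin n → Fin N,
        lpNorm p M ((N : ℝ)⁻¹ • ∑ j, f j - (n : ℝ)⁻¹ • ∑ l, f (t l))
      = 𝔼 t : Fin n → Fin N, (𝔼 i, |𝔼 j, f j i - 𝔼 l, f (t l) i| ^ p) ^ p⁻¹ := by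
        simp [lpNorm_eq_expect, Fintype.expect_eq_sum_div_card, div_eq_inv_mul, Finset.sum_apply]
    _ ≤ (𝔼 t : Fin n → Fin N, 𝔼 i, |𝔼 j, f j i - 𝔼 l, f (t l) i| ^ p) ^ p⁻¹ :=
        expect_rpow_inv_le_rpow_inv_expect (fun t ↦ expect_nonneg fun i _ ↦ by positivity)
          (by linarith)
    _ ≤ (2 * (4 * p / exp 1) ^ (p / 2) * (n : ℝ) ^ (-(p / 2))) ^ p⁻¹ := by gcongr
    _ = (2 * (4 * p / exp 1) ^ (p / 2)) ^ p⁻¹ * (n : ℝ) ^ (-(1 / 2 : ℝ)) := by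
        rw [mul_rpow (by positivity) (by positivity), ← rpow_mul (by positivity)]
        congr 2
        field_simp
end

section
/- There is a constant c > 0 such that for all integers n, M, N ≥ 1 and every f : {0,…,N−1} → ℝ^M with ‖f(j)‖_{L_∞^M} ≤ 1 for all j, the Monte Carlo method satisfies N^{−n} · Σ_{(t_1,…,t_n) ∈ {0,…,N−1}^n} ‖ S_N f − (1/n) Σ_{l=1}^n f(t_l) ‖_{L_∞^M} ≤ c·n^{−1/2}·(log(M+1))^{1/2} (logarithm to base 2). -/
/-!
Each coordinate of the Monte Carlo error is the mean of `n` independent uniform samples of a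
centred function bounded by `2`. The elementary inequality `exp x ≤ x + exp (x ^ 2)` makes the
linear term vanish on averaging, which gives the sub-Gaussian bound `𝔼 exp (s X_i) ≤ exp (4 s² / n)`.
Bounding `exp (s ‖X‖_∞)` by the sum of `exp (± s X_i)` over all coordinates and both signs,
Jensen's inequality yields `s 𝔼 ‖X‖_∞ ≤ log (2M) + 4 s² / n`, and the choice
`s = √(n log (2M)) / 2` gives `𝔼 ‖X‖_∞ ≤ 4 √(log (2M) / n)`.
-/

/-- The `L_∞^M` norm on `ℝ^M`: `‖x‖ = max_i |x i|`. -/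
noncomputable def linfNorm (M : ℕ) (x : Fin M → ℝ) : ℝ :=
  ⨆ i, |x i|

open Finset Real
open scoped BigOperators

lemma exp_le_self_add_exp_sq (x : ℝ) : exp x ≤ x + exp (x ^ 2) := by
  have hsq : 1 + x ^ 2 ≤ exp (x ^ 2) := by linarith [add_one_le_exp (x ^ 2)]
  rcases le_or_gt |x| 1 with hx | hx
  · have hbound := (abs_le.mp (exp_bound hx zero_lt_two)).2
    have h2 : ∑ i ∈ range 2, x ^ i / i.factorial = 1 + x := by simp [sum_range_succ]
    rw [h2, sq_abs] at hbound
    nlinarith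
  · rcases le_or_gt 0 x with h0 | h0
    · rw [abs_of_nonneg h0] at hx
      linarith [exp_le_exp.mpr (show x ≤ x ^ 2 by nlinarith)]
    · rw [abs_of_neg h0] at hx
      nlinarith [exp_le_one_iff.mpr h0.le]

lemma exp_expect_le_expect_exp {ι : Type*} [Fintype ι] [Nonempty ι] (a : ι → ℝ) :
    exp (𝔼 i, a i) ≤ 𝔼 i, exp (a i) := by
  set m := 𝔼 i, a i
  calc exp m = 𝔼 i, exp m * (a i - m + 1) := by
        rw [← mul_expect, expect_add_distrib, expect_sub_distrib, Fintype.expect_const,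
          Fintype.expect_const, sub_self, zero_add, mul_one]
    _ ≤ 𝔼 i, exp (a i) := expect_le_expect fun i _ => by
        simpa [← exp_add] using
          mul_le_mul_of_nonneg_left (add_one_le_exp (a i - m)) (exp_nonneg m)

lemma expect_pi_prod_eq_pow {ι κ K : Type*} [Fintype ι] [DecidableEq ι] [Fintype κ] [Semifield K]
    [CharZero K] (g : κ → K) : 𝔼 t : ι → κ, ∏ l, g (t l) = (𝔼 j, g j) ^ Fintype.card ι := by
  rw [Fintype.expect_eq_sum_div_card, Fintype.expect_eq_sum_div_card, div_pow,
    ← Fintype.prod_sum (fun _ : ι => g)]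
  simp

lemma expect_exp_mul_le_of_expect_eq_zero {κ : Type*} [Fintype κ] [Nonempty κ] {h : κ → ℝ}
    {b : ℝ} (h0 : 𝔼 j, h j = 0) (hb : ∀ j, |h j| ≤ b) (s : ℝ) :
    𝔼 j, exp (s * h j) ≤ exp (b ^ 2 * s ^ 2) :=
  calc 𝔼 j, exp (s * h j) ≤ 𝔼 j, (s * h j + exp ((s * h j) ^ 2)) :=
        expect_le_expect fun j _ => exp_le_self_add_exp_sq _
    _ = 𝔼 j, exp ((s * h j) ^ 2) := by
        rw [expect_add_distrib, ← mul_expect, h0, mul_zero, zero_add]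
    _ ≤ exp (b ^ 2 * s ^ 2) := expect_le univ_nonempty fun j _ => by
        rw [exp_le_exp, mul_pow, mul_comm (b ^ 2)]
        exact mul_le_mul_of_nonneg_left (sq_le_sq' (abs_le.mp (hb j)).1 (abs_le.mp (hb j)).2)
          (sq_nonneg s)

lemma expect_exp_mul_expect_comp_le {ι κ : Type*} [Fintype ι] [DecidableEq ι] [Fintype κ]
    [Nonempty κ] {h : κ → ℝ} {b : ℝ} (h0 : 𝔼 j, h j = 0) (hb : ∀ j, |h j| ≤ b) (s : ℝ) :
    𝔼 t : ι → κ, exp (s * 𝔼 l, h (t l)) ≤ exp (b ^ 2 / Fintype.card ι * s ^ 2) := by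
  have hsplit : ∀ t : ι → κ,
      exp (s * 𝔼 l, h (t l)) = ∏ l, exp (s / Fintype.card ι * h (t l)) := fun t => by
    rw [← exp_sum, ← mul_sum, Fintype.expect_eq_sum_div_card]
    ring_nf
  calc 𝔼 t : ι → κ, exp (s * 𝔼 l, h (t l))
        = (𝔼 j, exp (s / Fintype.card ι * h j)) ^ Fintype.card ι := by
        simp_rw [hsplit]
        exact expect_pi_prod_eq_pow (ι := ι) (fun j => exp (s / Fintype.card ι * h j))
    _ ≤ exp (b ^ 2 * (s / Fintype.card ι) ^ 2) ^ Fintype.card ι :=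
        pow_le_pow_left₀ (expect_nonneg fun j _ => (exp_pos _).le)
          (expect_exp_mul_le_of_expect_eq_zero h0 hb _) _
    _ = exp (b ^ 2 / Fintype.card ι * s ^ 2) := by
        rw [← exp_nat_mul]
        rcases eq_or_ne (Fintype.card ι : ℝ) 0 with hn | hn
        · simp [hn]
        · congr 1
          field_simp

lemma abs_le_linfNorm {M : ℕ} (x : Fin M → ℝ) (i : Fin M) : |x i| ≤ linfNorm M x :=
  le_ciSup (f := fun i => |x i|) (Set.finite_range _).bddAbove i

lemma exp_mul_linfNorm_le {M : ℕ} [NeZero M] (x : Fin M → ℝ) (s : ℝ) :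
    exp (s * linfNorm M x) ≤ ∑ i, (exp (s * x i) + exp (-s * x i)) := by
  obtain ⟨i, hi⟩ := exists_eq_ciSup_of_finite (f := fun i => |x i|)
  calc exp (s * linfNorm M x) ≤ exp (s * x i) + exp (-s * x i) := by
        rw [linfNorm, ← hi]
        rcases abs_choice (x i) with h | h <;> rw [h]
        · linarith [exp_pos (-s * x i)]
        · rw [mul_neg, ← neg_mul]
          linarith [exp_pos (s * x i)]
    _ ≤ ∑ i, (exp (s * x i) + exp (-s * x i)) :=
        single_le_sum (f := fun i => exp (s * x i) + exp (-s * x i))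
          (fun i _ => by positivity) (mem_univ i)

section MaximalInequality

variable {Ω : Type*} [Fintype Ω] [Nonempty Ω] {M : ℕ} [NeZero M] {X : Ω → Fin M → ℝ} {σ : ℝ}

lemma mul_expect_linfNorm_le (hX : ∀ i s, 𝔼 ω, exp (s * X ω i) ≤ exp (σ * s ^ 2)) (s : ℝ) :
    s * 𝔼 ω, linfNorm M (X ω) ≤ log (2 * M) + σ * s ^ 2 := by
  have hexp : exp (s * 𝔼 ω, linfNorm M (X ω)) ≤ 2 * M * exp (σ * s ^ 2) :=
    calc exp (s * 𝔼 ω, linfNorm M (X ω)) ≤ 𝔼 ω, exp (s * linfNorm M (X ω)) := by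
          rw [mul_expect]
          exact exp_expect_le_expect_exp _
      _ ≤ 𝔼 ω, ∑ i, (exp (s * X ω i) + exp (-s * X ω i)) :=
          expect_le_expect fun ω _ => exp_mul_linfNorm_le _ _
      _ = ∑ i, (𝔼 ω, exp (s * X ω i) + 𝔼 ω, exp (-s * X ω i)) := by
          rw [expect_sum_comm]
          simp_rw [expect_add_distrib]
      _ ≤ ∑ _i : Fin M, (exp (σ * s ^ 2) + exp (σ * (-s) ^ 2)) :=
          sum_le_sum fun i _ => add_le_add (hX i s) (hX i (-s))
      _ = 2 * M * exp (σ * s ^ 2) := by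
          rw [neg_sq, sum_const, card_univ, Fintype.card_fin, nsmul_eq_mul]
          ring
  have hM : (0 : ℝ) < M := Nat.cast_pos.mpr (NeZero.pos M)
  rw [← le_log_iff_exp_le (by positivity), log_mul (by positivity) (exp_ne_zero _),
    log_exp] at hexp
  exact hexp

lemma expect_linfNorm_le (hX : ∀ i s, 𝔼 ω, exp (s * X ω i) ≤ exp (σ * s ^ 2)) (hσ : 0 < σ) :
    𝔼 ω, linfNorm M (X ω) ≤ 2 * sqrt (σ * log (2 * M)) := by
  set L := log (2 * M)
  have hL : 0 < L := log_pos (by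
    have : (1 : ℝ) ≤ M := Nat.one_le_cast.mpr (NeZero.one_le)
    linarith)
  set s := sqrt (L / σ)
  have hs : 0 < s := sqrt_pos.mpr (div_pos hL hσ)
  have hs2 : σ * s ^ 2 = L := by
    rw [sq_sqrt (div_pos hL hσ).le]
    field_simp
  have hkey : 2 * sqrt (σ * L) * s = 2 * L := by
    rw [mul_assoc, ← sqrt_mul (mul_pos hσ hL).le, show σ * L * (L / σ) = L ^ 2 by field_simp,
      sqrt_sq hL.le]
  rw [← mul_le_mul_iff_of_pos_left hs, mul_comm s (2 * _), hkey]
  linarith [mul_expect_linfNorm_le hX s]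

end MaximalInequality

lemma log_two_mul_le_two_mul_logb {x : ℝ} (hx : 1 ≤ x) : log (2 * x) ≤ 2 * logb 2 (x + 1) := by
  have hlog : log (2 * x) ≤ 2 * log (x + 1) :=
    calc log (2 * x) ≤ log ((x + 1) ^ 2) := log_le_log (by positivity) (by nlinarith)
      _ = 2 * log (x + 1) := by rw [log_pow]; norm_num
  have hlogb : log (x + 1) ≤ logb 2 (x + 1) := by
    rw [logb, le_div_iff₀ (log_pos one_lt_two)]
    nlinarith [log_two_lt_d9, log_nonneg (show 1 ≤ x + 1 by linarith)]
  linarith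

lemma two_mul_sqrt_div_mul_log_le {n x : ℝ} (hn : 0 < n) (hx : 1 ≤ x) :
    2 * sqrt (2 ^ 2 / n * log (2 * x)) ≤ 6 * n ^ (-(1 / 2 : ℝ)) * logb 2 (x + 1) ^ (1 / 2 : ℝ) := by
  have hrhs : 6 * n ^ (-(1 / 2 : ℝ)) * logb 2 (x + 1) ^ (1 / 2 : ℝ)
      = sqrt (6 ^ 2 / n * logb 2 (x + 1)) := by
    rw [rpow_neg hn.le, ← sqrt_eq_rpow, ← sqrt_eq_rpow, sqrt_mul (by positivity), sqrt_div' _ hn.le,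
      sqrt_sq (by norm_num)]
    ring
  have hL : 0 ≤ log (2 * x) := log_nonneg (by linarith)
  have hℓ : 0 ≤ logb 2 (x + 1) := logb_nonneg one_lt_two (by linarith)
  rw [hrhs, le_sqrt (by positivity) (by positivity), mul_pow, sq_sqrt (by positivity),
    div_mul_eq_mul_div, div_mul_eq_mul_div, mul_div_assoc']
  exact div_le_div_of_nonneg_right (by nlinarith [log_two_mul_le_two_mul_logb hx]) hn.le

lemma smul_sum_sub_smul_sum_apply {n N M : ℕ} [NeZero n] (f : Fin N → Fin M → ℝ)
    (t : Fin n → Fin N) (i : Fin M) :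
    ((N : ℝ)⁻¹ • ∑ j, f j - (n : ℝ)⁻¹ • ∑ l, f (t l)) i = 𝔼 l, (𝔼 j, f j i - f (t l) i) := by
  rw [expect_sub_distrib, Fintype.expect_const, Fintype.expect_eq_sum_div_card,
    Fintype.expect_eq_sum_div_card]
  simp only [Pi.sub_apply, Pi.smul_apply, Finset.sum_apply, smul_eq_mul, Fintype.card_fin]
  ring

lemma abs_expect_sub_le {κ : Type*} [Fintype κ] [Nonempty κ] {a : κ → ℝ} (ha : ∀ j, |a j| ≤ 1)
    (j : κ) : |𝔼 k, a k - a j| ≤ 2 :=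
  calc |𝔼 k, a k - a j| ≤ |𝔼 k, a k| + |a j| := abs_sub _ _
    _ ≤ 𝔼 k, |a k| + 1 := add_le_add (abs_expect_le _ _) (ha j)
    _ ≤ 2 := by linarith [expect_le univ_nonempty fun k _ => ha k]

/-- There is a constant `c > 0` such that for all `n, M, N ≥ 1`
and every `f : {0,…,N−1} → ℝ^M` with `‖f j‖_{L_∞^M} ≤ 1`, the average (over all
`n`-tuples of sample points) `L_∞^M` error of the Monte Carlo method for the mean
`S_N f = (1/N) ∑ j, f j` is at most `c·n^(-1/2)·(log₂(M+1))^(1/2)`. -/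
theorem mc_upper_linf :
    ∃ c : ℝ, 0 < c ∧
      ∀ (n M N : ℕ), 1 ≤ n → 1 ≤ M → 1 ≤ N →
        ∀ f : Fin N → Fin M → ℝ, (∀ j, linfNorm M (f j) ≤ 1) →
          ((N : ℝ) ^ n)⁻¹ *
              ∑ t : Fin n → Fin N,
                linfNorm M ((N : ℝ)⁻¹ • ∑ j, f j - (n : ℝ)⁻¹ • ∑ l, f (t l))
            ≤ c * (n : ℝ) ^ (-(1 / 2 : ℝ)) * Real.logb 2 (M + 1) ^ (1 / 2 : ℝ) := by
  refine ⟨6, by norm_num, fun n M N hn hM hN f hf => ?_⟩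
  have : NeZero n := ⟨by omega⟩
  have : NeZero M := ⟨by omega⟩
  have : NeZero N := ⟨by omega⟩
  have hmgf : ∀ i s, 𝔼 t : Fin n → Fin N,
      exp (s * ((N : ℝ)⁻¹ • ∑ j, f j - (n : ℝ)⁻¹ • ∑ l, f (t l)) i) ≤ exp (2 ^ 2 / n * s ^ 2) :=
    fun i s => by
      simp_rw [smul_sum_sub_smul_sum_apply]
      simpa using expect_exp_mul_expect_comp_le (ι := Fin n) (h := fun j => 𝔼 k, f k i - f j i)
        (by simp [expect_sub_distrib])
        (abs_expect_sub_le fun j => (abs_le_linfNorm _ i).trans (hf j)) s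
  calc ((N : ℝ) ^ n)⁻¹ * ∑ t : Fin n → Fin N,
        linfNorm M ((N : ℝ)⁻¹ • ∑ j, f j - (n : ℝ)⁻¹ • ∑ l, f (t l))
      = 𝔼 t : Fin n → Fin N, linfNorm M ((N : ℝ)⁻¹ • ∑ j, f j - (n : ℝ)⁻¹ • ∑ l, f (t l)) := by
        rw [Fintype.expect_eq_sum_div_card, div_eq_inv_mul]
        simp
    _ ≤ 2 * sqrt (2 ^ 2 / n * log (2 * M)) := expect_linfNorm_le hmgf (by positivity)
    _ ≤ 6 * (n : ℝ) ^ (-(1 / 2 : ℝ)) * logb 2 (M + 1) ^ (1 / 2 : ℝ) :=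
        two_mul_sqrt_div_mul_log_le (by positivity) (by exact_mod_cast hM)
end

section
/- Let X be a normed real vector space, N ≥ 1, n ≥ 0 integers, and let a : {0,…,N−1} → X satisfy ‖a(j)‖_X ≤ 1 for all j. Suppose A is a randomized algorithm using n function values for computing the mean S_N on B_∞^N(X) (with outputs in X) whose worst-case expected error over B_∞^N(X) is at most ε. Then there exists a randomized algorithm B using n function values, with scalar inputs g : {0,…,N−1} → ℝ and outputs in X, whose worst-case expected error for computing the weighted-mean operator T_N^a over B_∞^N(ℝ) is at most ε; that is, sup over g with |g(j)| ≤ 1 of E_ω ‖ T_N^a g − B^ω(g) ‖_X ≤ ε. -/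
/-- **reduction of the many sums problem to vector-valued mean
computation, randomized setting.** Let `X` be a normed real vector space, `N ≥ 1`,
`n ≥ 0`, and `a : {0,…,N−1} → X` with `‖a j‖ ≤ 1`. If a randomized algorithm
`(Ω, P, t, φ)` using `n` function values computes the mean
`S_N f = (1/N) ∑ j, f j` on the unit ball `B_∞^N(X)` with worst-case expected error
at most `ε`, then there is a randomized algorithm `(Fin K, P', t', ψ)` using `n`
scalar function values computing the weighted-mean operator
`T_N^a g = (1/N) ∑ j, g j • a j` on `B_∞^N(ℝ)` with worst-case expected error at
most `ε`. -/
theorem many_sums_reduction_ran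
    (X : Type*) [NormedAddCommGroup X] [NormedSpace ℝ X]
    (N n : ℕ) (hN : 1 ≤ N)
    (a : Fin N → X) (ha : ∀ j, ‖a j‖ ≤ 1)
    (Ω : Type*) [Fintype Ω] (P : Ω → ℝ)
    (hP : ∀ ω, 0 ≤ P ω) (hP1 : ∑ ω, P ω = 1)
    (t : Ω → Fin n → Fin N) (φ : Ω → (Fin n → X) → X)
    (ε : ℝ)
    (hA : ∀ f : Fin N → X, (∀ j, ‖f j‖ ≤ 1) →
      ∑ ω, P ω * ‖(N : ℝ)⁻¹ • ∑ j, f j - φ ω (fun l => f (t ω l))‖ ≤ ε) :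
    ∃ (K : ℕ) (P' : Fin K → ℝ),
      (∀ ω, 0 ≤ P' ω) ∧ (∑ ω, P' ω = 1) ∧
      ∃ (t' : Fin K → Fin n → Fin N) (ψ : Fin K → (Fin n → ℝ) → X),
        ∀ g : Fin N → ℝ, (∀ j, |g j| ≤ 1) →
          ∑ ω, P' ω *
              ‖(N : ℝ)⁻¹ • ∑ j, g j • a j - ψ ω (fun l => g (t' ω l))‖ ≤ ε := by
  classical
  set e := (Fintype.equivFin Ω).symm
  refine ⟨Fintype.card Ω, fun k => P (e k), fun k => hP _, ?_,
    fun k => t (e k), fun k v => φ (e k) (fun l => v l • a (t (e k) l)), ?_⟩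
  · rw [← hP1]; exact e.sum_comp P
  · intro g hg
    have key := hA (fun j => g j • a j) (fun j => by
      rw [norm_smul]
      calc ‖g j‖ * ‖a j‖ ≤ 1 * 1 := by
            exact mul_le_mul (by simpa using hg j) (ha j) (norm_nonneg _) zero_le_one
        _ = 1 := one_mul 1)
    calc ∑ k : Fin (Fintype.card Ω), P (e k) *
          ‖(N : ℝ)⁻¹ • ∑ j, g j • a j -
            φ (e k) (fun l => g (t (e k) l) • a (t (e k) l))‖
        = ∑ ω, P ω * ‖(N : ℝ)⁻¹ • ∑ j, g j • a j -
            φ ω (fun l => g (t ω l) • a (t ω l))‖ :=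
          e.sum_comp (fun ω => P ω * ‖(N : ℝ)⁻¹ • ∑ j, g j • a j -
            φ ω (fun l => g (t ω l) • a (t ω l))‖)
      _ ≤ ε := key
end

section
/- For every p with 2 ≤ p ≤ ∞ there are constants c_0, c_1 > 0 such that for all integers n, M, N with 4 < n ≤ c_0·min(M,N), every randomized algorithm using n function values for computing the mean S_N on B_∞^N(L_p^M) (with outputs in L_p^M, error measured in the L_p^M norm) has worst-case expected error at least c_1 · n^{−1/2} · (log log n)^{−3/2} · (log log log n)^{−1} (logarithms to base 2). -/
open scoped ENNReal

/-- The (normalized) `L_p^M` norm on `ℝ^M` for `p ∈ [1,∞]`: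
`‖x‖ = ((1/M) ∑ i, |x i|^p)^(1/p)` for `p < ∞`, and `‖x‖ = max_i |x i|` for `p = ∞`. -/
noncomputable def lpNormE (p : ℝ≥0∞) (M : ℕ) (x : Fin M → ℝ) : ℝ :=
  if p = ∞ then ⨆ i, |x i|
  else ((M : ℝ)⁻¹ * ∑ i, |x i| ^ p.toReal) ^ (1 / p.toReal)

namespace MeanLP
open Finset


def sgn (b : Bool) : ℝ := if b then 1 else -1

lemma sgn_sq (b : Bool) : sgn b ^ 2 = 1 := by cases b <;> simp [sgn]

lemma abs_sgn (b : Bool) : |sgn b| = 1 := by cases b <;> simp [sgn]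

lemma sgn_not (b : Bool) : sgn (!b) = - sgn b := by cases b <;> simp [sgn]

variable {K : ℕ}

/-- flip the signs inside `U` -/
def bflip (U : Finset (Fin K)) (ε : Fin K → Bool) : Fin K → Bool :=
  fun i => if i ∈ U then !(ε i) else ε i

lemma bflip_invol (U : Finset (Fin K)) : Function.Involutive (bflip U) := by
  intro ε; funext i; by_cases h : i ∈ U <;> simp [bflip, h]

lemma sum_bflip (U : Finset (Fin K)) (F : (Fin K → Bool) → ℝ) :
    ∑ ε : Fin K → Bool, F (bflip U ε) = ∑ ε : Fin K → Bool, F ε :=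
  Fintype.sum_bijective (bflip U) (bflip_invol U).bijective _ _ (fun _ => rfl)

lemma sum_const_bool (c : ℝ) : ∑ _ε : Fin K → Bool, c = 2 ^ K * c := by
  simp [Finset.sum_const, Finset.card_univ, mul_comm]

def Xs (a : Fin K → ℝ) (s : Finset (Fin K)) (ε : Fin K → Bool) : ℝ :=
  ∑ i ∈ s, a i * sgn (ε i)

lemma Xs_bflip_of_disj (a : Fin K → ℝ) {s U : Finset (Fin K)}
    (h : ∀ i ∈ s, i ∉ U) (ε : Fin K → Bool) : Xs a s (bflip U ε) = Xs a s ε :=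
  Finset.sum_congr rfl fun i hi => by simp [bflip, h i hi]

lemma Xs_bflip_self (a : Fin K → ℝ) (U : Finset (Fin K)) (ε : Fin K → Bool) :
    Xs a U (bflip U ε) = - Xs a U ε := by
  unfold Xs
  rw [← Finset.sum_neg_distrib]
  exact Finset.sum_congr rfl fun i hi => by simp [bflip, hi, sgn_not]


lemma Xs_insert (a : Fin K → ℝ) {s : Finset (Fin K)} {i : Fin K} (h : i ∉ s) (ε : Fin K → Bool) :
    Xs a (insert i s) ε = a i * sgn (ε i) + Xs a s ε := Finset.sum_insert h

lemma sum_sq (a : Fin K → ℝ) (s : Finset (Fin K)) :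
    ∑ ε : Fin K → Bool, (Xs a s ε) ^ 2 = 2 ^ K * ∑ i ∈ s, a i ^ 2 := by
  classical
  induction s using Finset.induction_on with
  | empty => simp [Xs]
  | @insert i s hi ih =>
    have hpair : ∀ ε : Fin K → Bool,
        (Xs a (insert i s) ε) ^ 2 + (Xs a (insert i s) (bflip {i} ε)) ^ 2
          = 2 * (Xs a s ε) ^ 2 + 2 * a i ^ 2 := by
      intro ε
      have h1 : Xs a s (bflip {i} ε) = Xs a s ε :=
        Xs_bflip_of_disj a (fun j hj => by
          simp only [Finset.mem_singleton]; rintro rfl; exact hi hj) ε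
      have h2 : sgn (bflip {i} ε i) = - sgn (ε i) := by simp [bflip, sgn_not]
      rw [Xs_insert a hi, Xs_insert a hi, h1, h2]
      have ht := sgn_sq (ε i)
      linear_combination (2 * a i ^ 2) * ht
    have key : 2 * ∑ ε : Fin K → Bool, (Xs a (insert i s) ε) ^ 2
        = 2 * (∑ ε : Fin K → Bool, (Xs a s ε) ^ 2) + 2 ^ K * (2 * a i ^ 2) := by
      calc 2 * ∑ ε : Fin K → Bool, (Xs a (insert i s) ε) ^ 2
          = ∑ ε : Fin K → Bool, (Xs a (insert i s) ε) ^ 2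
            + ∑ ε : Fin K → Bool, (Xs a (insert i s) (bflip {i} ε)) ^ 2 := by
            rw [sum_bflip {i} (fun ε => (Xs a (insert i s) ε) ^ 2)]; ring
        _ = ∑ ε : Fin K → Bool,
              ((Xs a (insert i s) ε) ^ 2 + (Xs a (insert i s) (bflip {i} ε)) ^ 2) :=
            Finset.sum_add_distrib.symm
        _ = ∑ ε : Fin K → Bool, (2 * (Xs a s ε) ^ 2 + 2 * a i ^ 2) :=
            Finset.sum_congr rfl fun ε _ => hpair ε
        _ = 2 * (∑ ε : Fin K → Bool, (Xs a s ε) ^ 2) + 2 ^ K * (2 * a i ^ 2) := by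
            simp only [Finset.sum_add_distrib, ← Finset.mul_sum, sum_const_bool]; ring
    rw [Finset.sum_insert hi]
    have h2K : (0:ℝ) < 2 ^ K := by positivity
    nlinarith [key, ih]

lemma sum_quartic (a : Fin K → ℝ) (s : Finset (Fin K)) :
    ∑ ε : Fin K → Bool, (Xs a s ε) ^ 4 ≤ 3 * 2 ^ K * (∑ i ∈ s, a i ^ 2) ^ 2 := by
  classical
  induction s using Finset.induction_on with
  | empty => simp [Xs]
  | @insert i s hi ih =>
    have hpair : ∀ ε : Fin K → Bool,
        (Xs a (insert i s) ε) ^ 4 + (Xs a (insert i s) (bflip {i} ε)) ^ 4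
          = 2 * (Xs a s ε) ^ 4 + 12 * a i ^ 2 * (Xs a s ε) ^ 2 + 2 * a i ^ 4 := by
      intro ε
      have h1 : Xs a s (bflip {i} ε) = Xs a s ε :=
        Xs_bflip_of_disj a (fun j hj => by
          simp only [Finset.mem_singleton]; rintro rfl; exact hi hj) ε
      have h2 : sgn (bflip {i} ε i) = - sgn (ε i) := by simp [bflip, sgn_not]
      rw [Xs_insert a hi, Xs_insert a hi, h1, h2]
      have ht := sgn_sq (ε i)
      linear_combination (12 * a i ^ 2 * (Xs a s ε) ^ 2
        + 2 * a i ^ 4 * ((sgn (ε i)) ^ 2 + 1)) * ht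
    have key : 2 * ∑ ε : Fin K → Bool, (Xs a (insert i s) ε) ^ 4
        = 2 * (∑ ε : Fin K → Bool, (Xs a s ε) ^ 4)
          + 12 * a i ^ 2 * (∑ ε : Fin K → Bool, (Xs a s ε) ^ 2)
          + 2 ^ K * (2 * a i ^ 4) := by
      calc 2 * ∑ ε : Fin K → Bool, (Xs a (insert i s) ε) ^ 4
          = ∑ ε : Fin K → Bool, (Xs a (insert i s) ε) ^ 4
            + ∑ ε : Fin K → Bool, (Xs a (insert i s) (bflip {i} ε)) ^ 4 := by
            rw [sum_bflip {i} (fun ε => (Xs a (insert i s) ε) ^ 4)]; ring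
        _ = ∑ ε : Fin K → Bool,
              ((Xs a (insert i s) ε) ^ 4 + (Xs a (insert i s) (bflip {i} ε)) ^ 4) :=
            Finset.sum_add_distrib.symm
        _ = ∑ ε : Fin K → Bool, (2 * (Xs a s ε) ^ 4 + 12 * a i ^ 2 * (Xs a s ε) ^ 2
              + 2 * a i ^ 4) :=
            Finset.sum_congr rfl fun ε _ => hpair ε
        _ = _ := by
            simp only [Finset.sum_add_distrib, ← Finset.mul_sum, sum_const_bool]; ring
    rw [Finset.sum_insert hi]
    have h2K : (0:ℝ) < 2 ^ K := by positivity
    have hsq := sum_sq a s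
    have hQ0 : (0:ℝ) ≤ ∑ j ∈ s, a j ^ 2 := Finset.sum_nonneg fun j _ => sq_nonneg _
    nlinarith [key, ih, sq_nonneg (a i), sq_nonneg (a i ^ 2), mul_nonneg h2K.le (sq_nonneg (a i ^ 2))]


lemma khintchine (a : Fin K → ℝ) (s : Finset (Fin K)) :
    2 ^ K * Real.sqrt ((∑ i ∈ s, a i ^ 2) / 3) ≤ ∑ ε : Fin K → Bool, |Xs a s ε| := by
  classical
  set T : ℝ := 2 ^ K with hTdef
  have hT0 : (0:ℝ) < T := by positivity
  set Q : ℝ := ∑ i ∈ s, a i ^ 2 with hQdef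
  have hQ0 : 0 ≤ Q := Finset.sum_nonneg fun i _ => sq_nonneg _
  set A : ℝ := ∑ ε : Fin K → Bool, |Xs a s ε| with hAdef
  have hA0 : 0 ≤ A := Finset.sum_nonneg fun ε _ => abs_nonneg _
  rcases eq_or_lt_of_le hQ0 with h0 | hQpos
  · rw [← h0]; simpa using hA0
  set D : ℝ := ∑ ε : Fin K → Bool, (Xs a s ε) ^ 2 * |Xs a s ε| with hDdef
  have hD0 : 0 ≤ D := Finset.sum_nonneg fun ε _ => by positivity
  have hB : ∑ ε : Fin K → Bool, (Xs a s ε) ^ 2 = T * Q := sum_sq a s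
  have hC : ∑ ε : Fin K → Bool, (Xs a s ε) ^ 4 ≤ 3 * T * Q ^ 2 := by
    have h := sum_quartic a s; rw [← hTdef, ← hQdef] at h; linarith
  have cs1 : (T * Q) ^ 2 ≤ A * D := by
    have h := Finset.sum_mul_sq_le_sq_mul_sq Finset.univ
      (fun ε : Fin K → Bool => Real.sqrt |Xs a s ε|)
      (fun ε : Fin K → Bool => |Xs a s ε| * Real.sqrt |Xs a s ε|)
    have e1 : ∀ ε : Fin K → Bool,
        Real.sqrt |Xs a s ε| * (|Xs a s ε| * Real.sqrt |Xs a s ε|) = (Xs a s ε) ^ 2 := by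
      intro ε
      have hu := Real.mul_self_sqrt (abs_nonneg (Xs a s ε))
      calc Real.sqrt |Xs a s ε| * (|Xs a s ε| * Real.sqrt |Xs a s ε|)
          = (Real.sqrt |Xs a s ε| * Real.sqrt |Xs a s ε|) * |Xs a s ε| := by ring
        _ = |Xs a s ε| * |Xs a s ε| := by rw [hu]
        _ = (Xs a s ε) ^ 2 := by rw [abs_mul_abs_self, ← sq]
    have e2 : ∀ ε : Fin K → Bool, (Real.sqrt |Xs a s ε|) ^ 2 = |Xs a s ε| :=
      fun ε => Real.sq_sqrt (abs_nonneg _)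
    have e3 : ∀ ε : Fin K → Bool,
        (|Xs a s ε| * Real.sqrt |Xs a s ε|) ^ 2 = (Xs a s ε) ^ 2 * |Xs a s ε| := by
      intro ε; rw [mul_pow, Real.sq_sqrt (abs_nonneg _), sq_abs]
    simp only [e1, e2, e3] at h
    rw [hB] at h
    exact h
  have cs2 : D ^ 2 ≤ (T * Q) * (3 * T * Q ^ 2) := by
    have h := Finset.sum_mul_sq_le_sq_mul_sq Finset.univ
      (fun ε : Fin K → Bool => |Xs a s ε|)
      (fun ε : Fin K → Bool => (Xs a s ε) ^ 2)
    have e1 : ∀ ε : Fin K → Bool, |Xs a s ε| * (Xs a s ε) ^ 2 = (Xs a s ε) ^ 2 * |Xs a s ε| :=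
      fun ε => mul_comm _ _
    have e2 : ∀ ε : Fin K → Bool, |Xs a s ε| ^ 2 = (Xs a s ε) ^ 2 := fun ε => sq_abs _
    have e3 : ∀ ε : Fin K → Bool, ((Xs a s ε) ^ 2) ^ 2 = (Xs a s ε) ^ 4 := fun ε => by ring
    simp only [e1, e2, e3] at h
    rw [hB] at h
    calc D ^ 2 ≤ (T * Q) * ∑ ε : Fin K → Bool, (Xs a s ε) ^ 4 := h
      _ ≤ (T * Q) * (3 * T * Q ^ 2) := by
          exact mul_le_mul_of_nonneg_left hC (by positivity)
  have h5 : T ^ 2 * Q ≤ 3 * A ^ 2 := by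
    have h4 : (T * Q) ^ 4 ≤ A ^ 2 * ((T * Q) * (3 * T * Q ^ 2)) := by
      calc (T * Q) ^ 4 = ((T * Q) ^ 2) ^ 2 := by ring
        _ ≤ (A * D) ^ 2 := pow_le_pow_left₀ (sq_nonneg _) cs1 2
        _ = A ^ 2 * D ^ 2 := by ring
        _ ≤ A ^ 2 * ((T * Q) * (3 * T * Q ^ 2)) :=
            mul_le_mul_of_nonneg_left cs2 (sq_nonneg _)
    nlinarith [mul_pos (mul_pos hT0 hT0) (mul_pos (mul_pos hQpos hQpos) hQpos), h4, hT0, hQpos]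
  calc T * Real.sqrt (Q / 3) = Real.sqrt (T ^ 2 * (Q / 3)) := by
        rw [Real.sqrt_mul (sq_nonneg T), Real.sqrt_sq hT0.le]
    _ ≤ Real.sqrt (A ^ 2) := Real.sqrt_le_sqrt (by linarith)
    _ = A := Real.sqrt_sq hA0

lemma key (a : Fin K → ℝ) (U : Finset (Fin K)) (m : (Fin K → Bool) → ℝ)
    (hm : ∀ ε, m (bflip U ε) = m ε) :
    2 ^ K * Real.sqrt ((∑ i ∈ U, a i ^ 2) / 3) ≤
      ∑ ε : Fin K → Bool, |(∑ i, a i * sgn (ε i)) - m ε| := by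
  classical
  have hsplit : ∀ ε : Fin K → Bool, (∑ i, a i * sgn (ε i)) = Xs a U ε + Xs a Uᶜ ε := by
    intro ε
    rw [Xs, Xs, Finset.sum_add_sum_compl]
  have tri : ∀ x y : ℝ, |x - y| ≤ |x| + |y| := fun x y => abs_sub x y
  have hpair : ∀ ε : Fin K → Bool, 2 * |Xs a U ε| ≤
      |(∑ i, a i * sgn (ε i)) - m ε|
        + |(∑ i, a i * sgn (bflip U ε i)) - m (bflip U ε)| := by
    intro ε
    have h1 : Xs a Uᶜ (bflip U ε) = Xs a Uᶜ ε :=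
      Xs_bflip_of_disj a (fun i hi => Finset.mem_compl.mp hi) ε
    have h2 := Xs_bflip_self a U ε
    rw [hsplit ε, hsplit (bflip U ε), hm, h1, h2]
    have h3 : (2:ℝ) * |Xs a U ε| =
        |(Xs a U ε + Xs a Uᶜ ε - m ε) - (- Xs a U ε + Xs a Uᶜ ε - m ε)| := by
      rw [show (Xs a U ε + Xs a Uᶜ ε - m ε) - (- Xs a U ε + Xs a Uᶜ ε - m ε)
          = 2 * Xs a U ε by ring, abs_mul]
      norm_num
    rw [h3]
    exact tri _ _
  have hsum : 2 * (∑ ε : Fin K → Bool, |(∑ i, a i * sgn (ε i)) - m ε|)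
      = ∑ ε : Fin K → Bool, (|(∑ i, a i * sgn (ε i)) - m ε|
        + |(∑ i, a i * sgn (bflip U ε i)) - m (bflip U ε)|) := by
    rw [Finset.sum_add_distrib,
      sum_bflip U (fun ε => |(∑ i, a i * sgn (ε i)) - m ε|)]
    ring
  have h1 : ∑ ε : Fin K → Bool, 2 * |Xs a U ε|
      ≤ 2 * (∑ ε : Fin K → Bool, |(∑ i, a i * sgn (ε i)) - m ε|) := by
    rw [hsum]
    exact Finset.sum_le_sum fun ε _ => hpair ε
  have h2 : 2 ^ K * Real.sqrt ((∑ i ∈ U, a i ^ 2) / 3) ≤ ∑ ε : Fin K → Bool, |Xs a U ε| :=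
    khintchine a U
  rw [← Finset.mul_sum] at h1
  linarith


end MeanLP
namespace MeanLP


lemma abs_avg_le_lpNormE (p : ℝ≥0∞) (hp : 2 ≤ p) {M : ℕ} (hM : 0 < M) (y : Fin M → ℝ) :
    |(M : ℝ)⁻¹ * ∑ i, y i| ≤ lpNormE p M y := by
  have hM0 : (0:ℝ) < M := by exact_mod_cast hM
  have step1 : |(M : ℝ)⁻¹ * ∑ i, y i| ≤ (M:ℝ)⁻¹ * ∑ i, |y i| := by
    rw [abs_mul, abs_inv, Nat.abs_cast]
    exact mul_le_mul_of_nonneg_left (Finset.abs_sum_le_sum_abs _ _) (by positivity)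
  refine step1.trans ?_
  unfold lpNormE
  by_cases hpi : p = ∞
  · rw [if_pos hpi]
    haveI : Nonempty (Fin M) := ⟨⟨0, hM⟩⟩
    have hb : ∀ i : Fin M, |y i| ≤ ⨆ j, |y j| := fun i =>
      le_ciSup (f := fun j => |y j|) (Set.Finite.bddAbove (Set.finite_range _)) i
    calc (M:ℝ)⁻¹ * ∑ i, |y i| ≤ (M:ℝ)⁻¹ * ∑ _i : Fin M, (⨆ j, |y j|) :=
          mul_le_mul_of_nonneg_left (Finset.sum_le_sum fun i _ => hb i) (by positivity)
      _ = ⨆ j, |y j| := by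
          rw [Finset.sum_const, Finset.card_univ, Fintype.card_fin, nsmul_eq_mul]
          field_simp
  · rw [if_neg hpi]
    have hr : (1:ℝ) ≤ p.toReal := by
      have h2 : (2:ℝ≥0∞).toReal ≤ p.toReal := ENNReal.toReal_mono hpi hp
      simp only [ENNReal.toReal_ofNat] at h2
      linarith
    have hw1 : ∑ _i : Fin M, (M:ℝ)⁻¹ = 1 := by
      rw [Finset.sum_const, Finset.card_univ, Fintype.card_fin, nsmul_eq_mul]
      field_simp
    have h := Real.arith_mean_le_rpow_mean Finset.univ (fun _ : Fin M => (M:ℝ)⁻¹)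
      (fun i => |y i|) (fun i _ => by positivity) hw1 (fun i _ => abs_nonneg _) hr
    calc (M:ℝ)⁻¹ * ∑ i, |y i| = ∑ i, (M:ℝ)⁻¹ * |y i| := Finset.mul_sum _ _ _
      _ ≤ (∑ i, (M:ℝ)⁻¹ * |y i| ^ p.toReal) ^ (1/p.toReal) := h
      _ = ((M:ℝ)⁻¹ * ∑ i, |y i| ^ p.toReal) ^ (1/p.toReal) := by rw [Finset.mul_sum]

lemma lpNormE_const_le (p : ℝ≥0∞) {M : ℕ} (hM : 0 < M) {c : ℝ} (hc : |c| = 1) :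
    lpNormE p M (fun _ => c) ≤ 1 := by
  unfold lpNormE
  by_cases hpi : p = ∞
  · rw [if_pos hpi]
    haveI : Nonempty (Fin M) := ⟨⟨0, hM⟩⟩
    simp [hc]
  · rw [if_neg hpi]
    have : ∑ _i : Fin M, |c| ^ p.toReal = (M:ℝ) := by
      rw [hc, Real.one_rpow, Finset.sum_const, Finset.card_univ, Fintype.card_fin,
        nsmul_eq_mul, mul_one]
    rw [this, inv_mul_cancel₀ (by positivity : (M:ℝ) ≠ 0), Real.one_rpow]


end MeanLP

/-- For every `2 ≤ p ≤ ∞` there are constants `c₀, c₁ > 0` such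
that for all `n, M, N` with `4 < n ≤ c₀·min(M,N)`, every randomized algorithm using
`n` function values for computing the mean `S_N` on `B_∞^N(L_p^M)` has worst-case
expected error at least `c₁ · n^(−1/2) · (log₂ log₂ n)^(−3/2) · (log₂ log₂ log₂ n)^(−1)`:
any upper bound `b` for the expected errors over the unit ball is at least that much. -/
theorem mean_lp_lower_high (p : ℝ≥0∞) (hp : 2 ≤ p) :
    ∃ c₀ c₁ : ℝ, 0 < c₀ ∧ 0 < c₁ ∧
      ∀ (n M N : ℕ), 4 < n → (n : ℝ) ≤ c₀ * min (M : ℝ) (N : ℝ) →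
        ∀ (Ω : Type) [Fintype Ω] (P : Ω → ℝ),
          (∀ ω, 0 ≤ P ω) → (∑ ω, P ω = 1) →
          ∀ (t : Ω → Fin n → Fin N)
            (φ : Ω → (Fin n → (Fin M → ℝ)) → (Fin M → ℝ)) (b : ℝ),
            (∀ f : Fin N → Fin M → ℝ, (∀ j, lpNormE p M (f j) ≤ 1) →
              ∑ ω, P ω *
                  lpNormE p M
                    ((N : ℝ)⁻¹ • ∑ j, f j - φ ω (fun l => f (t ω l))) ≤ b) →
            c₁ * (n : ℝ) ^ (-(1 / 2 : ℝ)) *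
                Real.logb 2 (Real.logb 2 n) ^ (-(3 / 2 : ℝ)) *
                (Real.logb 2 (Real.logb 2 (Real.logb 2 n)))⁻¹ ≤ b := by
  classical
  refine ⟨1/4, 1/40, by norm_num, by norm_num, ?_⟩
  intro n M N hn4 hc Ω _ P hP hP1 t φ b hb
  -- basic size bounds
  have hminM : ((n:ℝ)) ≤ (1/4) * (M:ℝ) := hc.trans (by
    have h := min_le_left (M:ℝ) (N:ℝ); nlinarith)
  have hminN : ((n:ℝ)) ≤ (1/4) * (N:ℝ) := hc.trans (by
    have h := min_le_right (M:ℝ) (N:ℝ); nlinarith)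
  have hM4 : 4 * n ≤ M := by exact_mod_cast (by push_cast; linarith : ((4*n:ℕ):ℝ) ≤ (M:ℝ))
  have hN4 : 4 * n ≤ N := by exact_mod_cast (by push_cast; linarith : ((4*n:ℕ):ℝ) ≤ (N:ℝ))
  have hM0 : 0 < M := by omega
  have hN0 : 0 < N := by omega
  set K := 2 * n with hKdef
  have hK0 : 0 < K := by omega
  set q := N / K with hqdef
  have hq2 : 2 ≤ q := by
    rw [hqdef]; exact (Nat.le_div_iff_mul_le (by omega)).mpr (by omega)
  have hKq : K * q ≤ N := by rw [hqdef, mul_comm]; exact Nat.div_mul_le_self N K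
  have hN2Kq : N ≤ 2 * (K * q) := by
    have h1 := Nat.div_add_mod N K
    rw [← hqdef] at h1
    have h2 : N % K < K := Nat.mod_lt N (by omega)
    have h3 : K * 1 ≤ K * q := Nat.mul_le_mul_left K (by omega)
    have h4 : q * K = K * q := mul_comm _ _
    have h5 : K * 1 = K := mul_one K
    omega
  have hKsub : K - 1 < K := by omega
  set blockIdx : Fin N → Fin K := fun j =>
    ⟨min (j.val / q) (K - 1), lt_of_le_of_lt (min_le_right _ _) hKsub⟩ with hblockIdx
  set cardB : Fin K → ℕ := fun i =>
    (Finset.univ.filter fun j : Fin N => blockIdx j = i).card with hcardBdef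
  have hq0 : 0 < q := by omega
  have hcardB : ∀ i : Fin K, q ≤ cardB i := by
    intro i
    have hlt : ∀ m : Fin q, i.val * q + m.val < N := by
      intro m
      have h1 : i.val + 1 ≤ K := i.isLt
      have h2 : (i.val + 1) * q ≤ K * q := Nat.mul_le_mul_right q h1
      have h3 : i.val * q + m.val < (i.val + 1) * q := by
        rw [Nat.succ_mul]
        exact Nat.add_lt_add_left m.isLt _
      omega
    have hmem : ∀ m : Fin q, blockIdx ⟨i.val * q + m.val, hlt m⟩ = i := by
      intro m
      apply Fin.ext
      show min ((i.val * q + m.val) / q) (K - 1) = i.val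
      have hdiv : (i.val * q + m.val) / q = i.val := by
        rw [add_comm, Nat.add_mul_div_right _ _ hq0, Nat.div_eq_of_lt m.isLt, zero_add]
      rw [hdiv, min_eq_left (by have := i.isLt; omega)]
    calc q = (Finset.univ : Finset (Fin q)).card := by simp
      _ ≤ cardB i := by
          rw [hcardBdef]
          refine Finset.card_le_card_of_injOn (fun m => ⟨i.val * q + m.val, hlt m⟩)
            (fun m _ => Finset.mem_filter.mpr ⟨Finset.mem_univ _, hmem m⟩) ?_
          intro m₁ _ m₂ _ h
          have : i.val * q + m₁.val = i.val * q + m₂.val := congrArg Fin.val h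
          exact Fin.ext (by omega)
  set a : Fin K → ℝ := fun i => (cardB i : ℝ) / N with hadef
  have hN0' : (0:ℝ) < N := by exact_mod_cast hN0
  have hn0' : (0:ℝ) < n := by exact_mod_cast (by omega : 0 < n)
  have ha0 : ∀ i, 0 ≤ a i := fun i => by rw [hadef]; positivity
  have halb : ∀ i, (4*(n:ℝ))⁻¹ ≤ a i := by
    intro i
    have haq : (q:ℝ)/N ≤ a i := by
      have hai : a i = (cardB i : ℝ)/N := by rw [hadef]
      rw [hai]
      gcongr
      exact_mod_cast hcardB i
    refine le_trans ?_ haq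
    rw [inv_eq_one_div, div_le_div_iff₀ (by positivity) hN0']
    have h1 : (N:ℝ) ≤ 2*((K:ℝ)*(q:ℝ)) := by exact_mod_cast hN2Kq
    have hKr : (K:ℝ) = 2*(n:ℝ) := by rw [hKdef]; push_cast; ring
    rw [hKr] at h1
    nlinarith
  -- the hard inputs
  set fE : (Fin K → Bool) → Fin N → Fin M → ℝ :=
    fun ε j _ => MeanLP.sgn (ε (blockIdx j)) with hfE
  have hball : ∀ ε j, lpNormE p M (fE ε j) ≤ 1 := fun ε j =>
    MeanLP.lpNormE_const_le p hM0 (MeanLP.abs_sgn _)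
  set S : (Fin K → Bool) → ℝ := fun ε => ∑ i, a i * MeanLP.sgn (ε i) with hS
  have hmean : ∀ ε, (N:ℝ)⁻¹ • ∑ j, fE ε j = fun _ : Fin M => S ε := by
    intro ε
    funext i'
    have h1 : ((N:ℝ)⁻¹ • ∑ j, fE ε j) i' = (N:ℝ)⁻¹ * ∑ j, MeanLP.sgn (ε (blockIdx j)) := by
      simp [hfE, Finset.sum_apply]
    rw [h1]
    have hfib := Finset.sum_fiberwise' (Finset.univ : Finset (Fin N)) blockIdx
      (fun i => MeanLP.sgn (ε i))
    rw [← hfib, hS]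
    rw [Finset.mul_sum]
    refine Finset.sum_congr rfl fun i _ => ?_
    rw [Finset.sum_const]
    rw [nsmul_eq_mul]
    rw [hadef]
    rw [hcardBdef]
    ring
  set mhat : Ω → (Fin K → Bool) → ℝ :=
    fun ω ε => (M:ℝ)⁻¹ * ∑ i, φ ω (fun l => fE ε (t ω l)) i with hmhat
  set err : Ω → (Fin K → Bool) → ℝ := fun ω ε =>
    lpNormE p M ((N:ℝ)⁻¹ • ∑ j, fE ε j - φ ω fun l => fE ε (t ω l)) with herrdef
  have herr : ∀ ω ε, |S ε - mhat ω ε| ≤ err ω ε := by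
    intro ω ε
    have h := MeanLP.abs_avg_le_lpNormE p hp hM0
      ((N:ℝ)⁻¹ • ∑ j, fE ε j - φ ω fun l => fE ε (t ω l))
    have hv : S ε - mhat ω ε
        = (M:ℝ)⁻¹ * ∑ i, ((N:ℝ)⁻¹ • ∑ j, fE ε j - φ ω fun l => fE ε (t ω l)) i := by
      rw [hmean ε]
      have h2 : ∀ i : Fin M, ((fun _ : Fin M => S ε) - φ ω fun l => fE ε (t ω l)) i
          = S ε - φ ω (fun l => fE ε (t ω l)) i := fun i => rfl
      rw [Finset.sum_congr rfl fun i _ => h2 i, Finset.sum_sub_distrib, Finset.sum_const,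
        Finset.card_univ, Fintype.card_fin, nsmul_eq_mul, hmhat]
      have hMne : (M:ℝ) ≠ 0 := by positivity
      field_simp
    rw [hv]
    exact h
  -- per-ω lower bound
  have hωbound : ∀ ω, (2:ℝ)^K * Real.sqrt ((48*(n:ℝ))⁻¹) ≤ ∑ ε : Fin K → Bool, err ω ε := by
    intro ω
    set V : Finset (Fin K) := Finset.univ.image (fun l => blockIdx (t ω l)) with hV
    set U : Finset (Fin K) := Vᶜ with hU
    have hmU : ∀ ε, mhat ω (MeanLP.bflip U ε) = mhat ω ε := by
      intro ε
      have harg : (fun l => fE (MeanLP.bflip U ε) (t ω l)) = fun l => fE ε (t ω l) := by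
        funext l
        funext i'
        show MeanLP.sgn (MeanLP.bflip U ε (blockIdx (t ω l)))
          = MeanLP.sgn (ε (blockIdx (t ω l)))
        have hmem : blockIdx (t ω l) ∈ V := Finset.mem_image.mpr ⟨l, Finset.mem_univ _, rfl⟩
        have hnU : blockIdx (t ω l) ∉ U := by
          rw [hU, Finset.mem_compl]; simpa using hmem
        simp [MeanLP.bflip, hnU]
      rw [hmhat]
      simp only
      rw [harg]
    have hkey := MeanLP.key a U (mhat ω) hmU
    have hUcard : n ≤ U.card := by
      have h1 : V.card ≤ n := by
        refine le_trans Finset.card_image_le ?_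
        simp
      have h2 : U.card = K - V.card := by
        rw [hU, Finset.card_compl]
        simp
      omega
    have hQ : ((48:ℝ)*(n:ℝ))⁻¹ ≤ (∑ i ∈ U, a i ^ 2) / 3 := by
      have h1 : ∀ i ∈ U, ((4*(n:ℝ))⁻¹)^2 ≤ a i ^ 2 := fun i _ =>
        pow_le_pow_left₀ (by positivity) (halb i) 2
      have h2 : (U.card : ℝ) * ((4*(n:ℝ))⁻¹)^2 ≤ ∑ i ∈ U, a i ^ 2 := by
        calc (U.card : ℝ) * ((4*(n:ℝ))⁻¹)^2 = ∑ _i ∈ U, ((4*(n:ℝ))⁻¹)^2 := by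
              rw [Finset.sum_const, nsmul_eq_mul]
          _ ≤ ∑ i ∈ U, a i ^ 2 := Finset.sum_le_sum h1
      have h3 : ((n:ℝ)) * ((4*(n:ℝ))⁻¹)^2 ≤ (U.card:ℝ) * ((4*(n:ℝ))⁻¹)^2 := by
        refine mul_le_mul_of_nonneg_right ?_ (by positivity)
        exact_mod_cast hUcard
      have h4 : (n:ℝ) * ((4*(n:ℝ))⁻¹)^2 = (16*(n:ℝ))⁻¹ := by
        field_simp
        ring
      have h5 : ((48:ℝ)*(n:ℝ))⁻¹ = (16*(n:ℝ))⁻¹ / 3 := by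
        field_simp
        ring
      rw [h5]
      have : (16*(n:ℝ))⁻¹ ≤ ∑ i ∈ U, a i ^ 2 := by linarith
      linarith
    calc (2:ℝ)^K * Real.sqrt ((48*(n:ℝ))⁻¹)
        ≤ (2:ℝ)^K * Real.sqrt ((∑ i ∈ U, a i ^ 2)/3) :=
          mul_le_mul_of_nonneg_left (Real.sqrt_le_sqrt hQ) (by positivity)
      _ ≤ ∑ ε : Fin K → Bool, |S ε - mhat ω ε| := hkey
      _ ≤ ∑ ε : Fin K → Bool, err ω ε := Finset.sum_le_sum fun ε _ => herr ω ε
  -- averaging over ε and ω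
  have hglob : Real.sqrt ((48*(n:ℝ))⁻¹) ≤ b := by
    have hT0 : (0:ℝ) < 2^K := by positivity
    have hub : ∑ ε : Fin K → Bool, ∑ ω, P ω * err ω ε ≤ 2^K * b := by
      calc ∑ ε : Fin K → Bool, ∑ ω, P ω * err ω ε ≤ ∑ _ε : Fin K → Bool, b :=
            Finset.sum_le_sum fun ε _ => hb (fE ε) (hball ε)
        _ = 2^K * b := MeanLP.sum_const_bool b
    have hlb : 2^K * Real.sqrt ((48*(n:ℝ))⁻¹) ≤ ∑ ε : Fin K → Bool, ∑ ω, P ω * err ω ε := by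
      rw [Finset.sum_comm]
      calc (2:ℝ)^K * Real.sqrt ((48*(n:ℝ))⁻¹)
          = ∑ ω, P ω * ((2:ℝ)^K * Real.sqrt ((48*(n:ℝ))⁻¹)) := by
            rw [← Finset.sum_mul, hP1, one_mul]
        _ ≤ ∑ ω, ∑ ε : Fin K → Bool, P ω * err ω ε := by
            refine Finset.sum_le_sum fun ω _ => ?_
            rw [← Finset.mul_sum]
            exact mul_le_mul_of_nonneg_left (hωbound ω) (hP ω)
    have := le_trans hlb hub
    exact le_of_mul_le_mul_left this hT0
  -- numeric comparison with the loglog factors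
  have hn5 : (5:ℝ) ≤ (n:ℝ) := by exact_mod_cast (by omega : 5 ≤ n)
  have hL1 : (9/4:ℝ) ≤ Real.logb 2 n := by
    rw [Real.le_logb_iff_rpow_le (by norm_num) hn0']
    have h2 : ((2:ℝ) ^ ((9:ℝ)/4)) ^ (4:ℕ) = 2 ^ (9:ℕ) := by
      rw [← Real.rpow_natCast ((2:ℝ) ^ ((9:ℝ)/4)) 4, ← Real.rpow_mul (by norm_num : (0:ℝ) ≤ 2),
        show ((9:ℝ)/4) * ((4:ℕ):ℝ) = ((9:ℕ):ℝ) by norm_num, Real.rpow_natCast]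
    have h1 : (2:ℝ) ^ ((9:ℝ)/4) ≤ 5 := by
      refine le_of_pow_le_pow_left₀ (by norm_num : (4:ℕ) ≠ 0) (by norm_num : (0:ℝ) ≤ 5) ?_
      rw [h2]; norm_num
    linarith
  have hL1pos : (0:ℝ) < Real.logb 2 n := by linarith
  have hL2 : (29/25:ℝ) ≤ Real.logb 2 (Real.logb 2 n) := by
    rw [Real.le_logb_iff_rpow_le (by norm_num) hL1pos]
    have h2 : ((2:ℝ) ^ ((29:ℝ)/25)) ^ (25:ℕ) = 2 ^ (29:ℕ) := by
      rw [← Real.rpow_natCast ((2:ℝ) ^ ((29:ℝ)/25)) 25, ← Real.rpow_mul (by norm_num : (0:ℝ) ≤ 2),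
        show ((29:ℝ)/25) * ((25:ℕ):ℝ) = ((29:ℕ):ℝ) by norm_num, Real.rpow_natCast]
    have h1 : (2:ℝ) ^ ((29:ℝ)/25) ≤ 9/4 := by
      refine le_of_pow_le_pow_left₀ (by norm_num : (25:ℕ) ≠ 0) (by norm_num : (0:ℝ) ≤ 9/4) ?_
      rw [h2]; norm_num
    linarith
  have hL2pos : (0:ℝ) < Real.logb 2 (Real.logb 2 n) := by linarith
  have hL3 : (1/5:ℝ) ≤ Real.logb 2 (Real.logb 2 (Real.logb 2 n)) := by
    rw [Real.le_logb_iff_rpow_le (by norm_num) hL2pos]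
    have h2 : ((2:ℝ) ^ ((1:ℝ)/5)) ^ (5:ℕ) = 2 ^ (1:ℕ) := by
      rw [← Real.rpow_natCast ((2:ℝ) ^ ((1:ℝ)/5)) 5, ← Real.rpow_mul (by norm_num : (0:ℝ) ≤ 2),
        show ((1:ℝ)/5) * ((5:ℕ):ℝ) = ((1:ℕ):ℝ) by norm_num, Real.rpow_natCast]
    have h1 : (2:ℝ) ^ ((1:ℝ)/5) ≤ 29/25 := by
      refine le_of_pow_le_pow_left₀ (by norm_num : (5:ℕ) ≠ 0) (by norm_num : (0:ℝ) ≤ 29/25) ?_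
      rw [h2]; norm_num
    linarith
  set L2 := Real.logb 2 (Real.logb 2 n) with hL2def
  set L3 := Real.logb 2 L2 with hL3def
  have hB2le : L2 ^ (-(3/2:ℝ)) ≤ 1 :=
    Real.rpow_le_one_of_one_le_of_nonpos (by linarith) (by norm_num)
  have hB3le : L3⁻¹ ≤ 5 := by
    have h := inv_anti₀ (by norm_num : (0:ℝ) < 1/5) hL3
    simpa using h
  have hB3ge : (0:ℝ) ≤ L3⁻¹ := inv_nonneg.mpr (by linarith)
  have hA : ((n:ℝ)) ^ (-(1/2:ℝ)) = (Real.sqrt n)⁻¹ := by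
    rw [Real.rpow_neg hn0'.le, Real.sqrt_eq_rpow]
  have hsq48 : Real.sqrt 48 ≤ 8 := by
    rw [show (8:ℝ) = Real.sqrt 64 by
      rw [show (64:ℝ) = 8^2 by norm_num, Real.sqrt_sq (by norm_num : (0:ℝ) ≤ 8)]]
    exact Real.sqrt_le_sqrt (by norm_num)
  have hsn : 0 < Real.sqrt n := Real.sqrt_pos.mpr hn0'
  have hc48 : (8 * Real.sqrt n)⁻¹ ≤ Real.sqrt ((48*(n:ℝ))⁻¹) := by
    rw [Real.sqrt_inv, Real.sqrt_mul (by norm_num : (0:ℝ) ≤ 48)]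
    refine inv_anti₀ (by positivity) ?_
    exact mul_le_mul_of_nonneg_right hsq48 hsn.le
  have hfin : (1/40:ℝ) * (n:ℝ) ^ (-(1/2:ℝ)) * L2 ^ (-(3/2:ℝ)) * L3⁻¹
      ≤ (8 * Real.sqrt n)⁻¹ := by
    have hstep : (1/40:ℝ) * (n:ℝ) ^ (-(1/2:ℝ)) * L2 ^ (-(3/2:ℝ)) * L3⁻¹
        ≤ (1/40:ℝ) * (n:ℝ) ^ (-(1/2:ℝ)) * 1 * 5 := by
      have h1 : (1/40:ℝ) * (n:ℝ) ^ (-(1/2:ℝ)) * L2 ^ (-(3/2:ℝ))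
          ≤ (1/40:ℝ) * (n:ℝ) ^ (-(1/2:ℝ)) * 1 :=
        mul_le_mul_of_nonneg_left hB2le (by positivity)
      exact mul_le_mul h1 hB3le hB3ge (by positivity)
    refine hstep.trans ?_
    rw [hA, mul_one, show (1/40:ℝ) * (Real.sqrt n)⁻¹ * 5 = (8 * Real.sqrt n)⁻¹ by
      rw [mul_inv]; ring]
  exact hfin.trans (hc48.trans hglob)
end

section
/- For every p with 1 ≤ p < 2 there are constants c_0, c_1 > 0 such that for all integers n, M, N with 4 < n ≤ c_0·min(M,N), every randomized algorithm using n function values for computing the mean S_N on B_∞^N(L_p^M) (with outputs in L_p^M, error measured in the L_p^M norm) has worst-case expected error at least c_1 · n^{−1+1/p} · (log n)^{1−2/p} (logarithm to base 2). -/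
/-!
Yao's principle reduces the bound to deterministic algorithms averaged over a finite family of
inputs. Split `Fin N` into `2n` classes of size at least `N / (2n)`, attach to class `i` the
coordinate `i` of `ℝ^M`, and for `σ ⊆ Fin M` let `f_σ j` be `M^(1/p)` times the unit vector of the
class of `j` if that class lies in `σ`, and `0` otherwise; these inputs lie in the unit ball.
An algorithm sampling `n` points sees at most `n` classes, so at least `n` classes `H` stay unseen.
Toggling `σ` on `H` leaves the samples unchanged but moves the mean by at least `M^(1/p) / (4n)` in
every coordinate of `H`, so by the triangle inequality the two errors sum to at least
`(#H / M)^(1/p) · M^(1/p) / (4n) ≥ n^(1/p - 1) / 4`. As `p < 2`, the factor `(log₂ n)^(1 - 2/p)`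
is at most `1`.
-/

open Finset

section lpNorm

variable {p : ℝ} {M : ℕ}

theorem lpNorm_eq_mul (x : Fin M → ℝ) :
    lpNorm p M x = ((M : ℝ) ^ (1 / p))⁻¹ * (∑ i, |x i| ^ p) ^ (1 / p) := by
  rw [lpNorm, Real.mul_rpow (by positivity) (by positivity), Real.inv_rpow (Nat.cast_nonneg M)]

theorem lpNorm_sub_le (hp : 1 ≤ p) (x y : Fin M → ℝ) :
    lpNorm p M (x - y) ≤ lpNorm p M x + lpNorm p M y := by
  have hneg : ∀ i, |(-y) i| = |y i| := fun i => abs_neg (y i)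
  simp_rw [lpNorm_eq_mul, sub_eq_add_neg, ← mul_add]
  gcongr
  simpa only [Pi.add_apply, hneg] using Real.Lp_add_le univ x (-y) hp

theorem lpNorm_single (hp : 0 < p) (i : Fin M) (c : ℝ) :
    lpNorm p M (Pi.single i c) = |c| / (M : ℝ) ^ (1 / p) := by
  have hsum : ∑ k, |Pi.single (M := fun _ => ℝ) i c k| ^ p = |c| ^ p := by
    rw [Fintype.sum_eq_single i fun k hk => by simp [hk, Real.zero_rpow hp.ne']]
    simp
  rw [lpNorm_eq_mul, hsum, ← Real.rpow_mul (abs_nonneg c), mul_one_div_cancel hp.ne',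
    Real.rpow_one, inv_mul_eq_div]

theorem card_div_rpow_mul_le_lpNorm (hp : 0 < p) (x : Fin M → ℝ) (H : Finset (Fin M)) {c : ℝ}
    (hc : 0 ≤ c) (hx : ∀ i ∈ H, c ≤ |x i|) :
    ((#H : ℝ) / M) ^ (1 / p) * c ≤ lpNorm p M x := by
  have hsum : #H * c ^ p ≤ ∑ i, |x i| ^ p := calc
    #H * c ^ p = ∑ _i ∈ H, c ^ p := by rw [sum_const, nsmul_eq_mul]
    _ ≤ ∑ i ∈ H, |x i| ^ p := sum_le_sum fun i hi => by gcongr; exact hx i hi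
    _ ≤ ∑ i, |x i| ^ p := sum_le_sum_of_subset_of_nonneg (subset_univ H) fun i _ _ => by positivity
  calc ((#H : ℝ) / M) ^ (1 / p) * c = ((M : ℝ)⁻¹ * (#H * c ^ p)) ^ (1 / p) := by
        rw [← mul_assoc, Real.mul_rpow (by positivity) (by positivity), ← Real.rpow_mul hc,
          mul_one_div_cancel hp.ne', Real.rpow_one, inv_mul_eq_div]
    _ ≤ lpNorm p M x := by unfold lpNorm; gcongr

end lpNorm

theorem card_mul_le_two_mul_sum {α : Type*} [Fintype α] (e : Equiv.Perm α) (g : α → ℝ) {c : ℝ}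
    (h : ∀ a, c ≤ g a + g (e a)) : Fintype.card α * c ≤ 2 * ∑ a, g a := calc
  Fintype.card α * c = ∑ _a : α, c := by rw [sum_const, card_univ, nsmul_eq_mul]
  _ ≤ ∑ a, (g a + g (e a)) := sum_le_sum fun a _ => h a
  _ = 2 * ∑ a, g a := by rw [sum_add_distrib, Equiv.sum_comp e g]; ring

theorem average_case_le_worst_case {Ω α : Type*} [Fintype Ω] [Fintype α] [Nonempty α]
    (P : Ω → ℝ) (hP0 : ∀ ω, 0 ≤ P ω) (hP1 : ∑ ω, P ω = 1) (err : Ω → α → ℝ) {b c : ℝ}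
    (hb : ∀ a, ∑ ω, P ω * err ω a ≤ b) (hc : ∀ ω, Fintype.card α * c ≤ ∑ a, err ω a) :
    c ≤ b := by
  have hcard : (0 : ℝ) < Fintype.card α := by exact_mod_cast Fintype.card_pos
  refine le_of_mul_le_mul_left ?_ hcard
  calc Fintype.card α * c = ∑ ω, P ω * (Fintype.card α * c) := by rw [← sum_mul, hP1, one_mul]
    _ ≤ ∑ ω, P ω * ∑ a, err ω a := sum_le_sum fun ω _ => mul_le_mul_of_nonneg_left (hc ω) (hP0 ω)
    _ = ∑ a, ∑ ω, P ω * err ω a := by simp_rw [mul_sum]; exact sum_comm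
    _ ≤ ∑ _a : α, b := sum_le_sum fun a _ => hb a
    _ = Fintype.card α * b := by rw [sum_const, card_univ, nsmul_eq_mul]

theorem exists_div_le_card_fiber {m M N : ℕ} (hm : 0 < m) (hmM : m ≤ M) :
    ∃ (π : Fin N → Fin M) (G : Finset (Fin M)), #G = m ∧ ∀ i ∈ G, N / m ≤ #{j | π j = i} := by
  refine ⟨fun j => ⟨j % m, (Nat.mod_lt _ hm).trans_le hmM⟩, ({i | (i : ℕ) < m} : Finset (Fin M)),
    ?_, ?_⟩
  · rw [Fin.card_filter_val_lt, min_eq_right hmM]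
  · intro i hi
    simp only [mem_filter, mem_univ, true_and] at hi
    have hfit : ∀ k < N / m, k * m + i < N := fun k hk => calc
      k * m + i < (k + 1) * m := by rw [add_mul, one_mul]; omega
      _ ≤ N / m * m := Nat.mul_le_mul_right m hk
      _ ≤ N := Nat.div_mul_le_self N m
    calc N / m = #(univ : Finset (Fin (N / m))) := (card_fin _).symm
      _ ≤ #{j : Fin N | (⟨j % m, (Nat.mod_lt _ hm).trans_le hmM⟩ : Fin M) = i} := by
        refine card_le_card_of_injOn (fun k => ⟨k * m + i, hfit k k.2⟩) ?_ ?_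
        · intro k _
          simp [Fin.ext_iff, Nat.mod_eq_of_lt hi]
        · intro k _ k' _ h
          simp only [Fin.mk.injEq, Nat.add_right_cancel_iff] at h
          exact Fin.ext (Nat.eq_of_mul_eq_mul_right hm h)

section bump

variable {M N : ℕ} (π : Fin N → Fin M) (A : ℝ)

noncomputable def bumpInput (σ : Finset (Fin M)) (j : Fin N) : Fin M → ℝ :=
  Pi.single (π j) (if π j ∈ σ then A else 0)

theorem bumpInput_symmDiff_of_notMem {σ H : Finset (Fin M)} {j : Fin N} (hj : π j ∉ H) :
    bumpInput π A (symmDiff σ H) j = bumpInput π A σ j := by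
  simp [bumpInput, Finset.mem_symmDiff, hj]

theorem sum_bumpInput_apply (σ : Finset (Fin M)) (i : Fin M) :
    (∑ j, bumpInput π A σ j) i = #{j | π j = i} * if i ∈ σ then A else 0 := by
  simp only [bumpInput, Finset.sum_apply, Pi.single_apply]
  rw [← sum_filter, sum_congr rfl fun j hj => by rw [(mem_filter.1 hj).2.symm], sum_const,
    nsmul_eq_mul]
  simp_rw [eq_comm]

theorem abs_sum_bumpInput_sub_symmDiff {σ H : Finset (Fin M)} {i : Fin M} (hi : i ∈ H) :
    |(∑ j, bumpInput π A σ j - ∑ j, bumpInput π A (symmDiff σ H) j) i| =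
      #{j | π j = i} * |A| := by
  rw [Pi.sub_apply, sum_bumpInput_apply, sum_bumpInput_apply, ← mul_sub, abs_mul, Nat.abs_cast]
  by_cases hσ : i ∈ σ <;> simp [Finset.mem_symmDiff, hσ, hi]

theorem lpNorm_bumpInput_le_one {p : ℝ} (hp : 0 < p) (σ : Finset (Fin M)) (j : Fin N) :
    lpNorm p M (bumpInput π ((M : ℝ) ^ (1 / p)) σ j) ≤ 1 := by
  have hA : 0 < (M : ℝ) ^ (1 / p) := Real.rpow_pos_of_pos (by exact_mod_cast (π j).pos) _
  rw [bumpInput, lpNorm_single hp, div_le_one hA]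
  split_ifs
  · rw [abs_of_pos hA]
  · rw [abs_zero]; exact hA.le

theorem card_mul_le_two_mul_sum_lpNorm_error {p : ℝ} {n : ℕ} (hp : 1 ≤ p) (hA : 0 ≤ A)
    (t : Fin n → Fin N) (φ : (Fin n → Fin M → ℝ) → Fin M → ℝ) (H : Finset (Fin M))
    (hH : ∀ l, π (t l) ∉ H) {K : ℕ} (hK : ∀ i ∈ H, K ≤ #{j | π j = i}) :
    Fintype.card (Finset (Fin M)) * (((#H : ℝ) / M) ^ (1 / p) * (K * A / N)) ≤
      2 * ∑ σ, lpNorm p M ((N : ℝ)⁻¹ • ∑ j, bumpInput π A σ j -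
        φ (fun l => bumpInput π A σ (t l))) := by
  refine card_mul_le_two_mul_sum
    (Function.Involutive.toPerm (symmDiff · H) fun σ => symmDiff_symmDiff_cancel_right H σ) _
    fun σ => ?_
  have hsample : (fun l => bumpInput π A (symmDiff σ H) (t l)) = fun l => bumpInput π A σ (t l) :=
    funext fun l => bumpInput_symmDiff_of_notMem π A (hH l)
  have hgap : ∀ i ∈ H, K * A / N ≤
      |((N : ℝ)⁻¹ • (∑ j, bumpInput π A σ j - ∑ j, bumpInput π A (symmDiff σ H) j)) i| := by
    intro i hi
    rw [Pi.smul_apply, smul_eq_mul, abs_mul, abs_sum_bumpInput_sub_symmDiff π A hi, abs_inv,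
      Nat.abs_cast, abs_of_nonneg hA, div_eq_inv_mul]
    gcongr
    exact hK i hi
  calc _ ≤ lpNorm p M
        ((N : ℝ)⁻¹ • (∑ j, bumpInput π A σ j - ∑ j, bumpInput π A (symmDiff σ H) j)) :=
        card_div_rpow_mul_le_lpNorm (by linarith) _ H (by positivity) hgap
    _ = lpNorm p M (((N : ℝ)⁻¹ • ∑ j, bumpInput π A σ j - φ (fun l => bumpInput π A σ (t l))) -
          ((N : ℝ)⁻¹ • ∑ j, bumpInput π A (symmDiff σ H) j -
            φ (fun l => bumpInput π A (symmDiff σ H) (t l)))) := by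
        rw [hsample, smul_sub, sub_sub_sub_cancel_right]
    _ ≤ _ := lpNorm_sub_le hp _ _

end bump

theorem rpow_sub_one_div_four_le {p : ℝ} (hp : 0 < p) {n h M N K : ℕ} (hn : 0 < n) (hM : 0 < M)
    (hN : 0 < N) (hnh : n ≤ h) (hNK : N ≤ 4 * n * K) :
    (n : ℝ) ^ (1 / p - 1) / 4 ≤ ((h : ℝ) / M) ^ (1 / p) * (K * (M : ℝ) ^ (1 / p) / N) := by
  have hM' : (0 : ℝ) < (M : ℝ) ^ (1 / p) := Real.rpow_pos_of_pos (by exact_mod_cast hM) _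
  have hNK' : (N : ℝ) ≤ 4 * n * K := by exact_mod_cast hNK
  calc (n : ℝ) ^ (1 / p - 1) / 4 = (n : ℝ) ^ (1 / p) * (1 / (4 * n)) := by
        rw [Real.rpow_sub_one (by positivity)]; ring
    _ ≤ (h : ℝ) ^ (1 / p) * (K / N) := by
        refine mul_le_mul (by gcongr) ?_ (by positivity) (by positivity)
        rw [div_le_div_iff₀ (by positivity) (by positivity)]
        linarith
    _ = ((h : ℝ) / M) ^ (1 / p) * (K * (M : ℝ) ^ (1 / p) / N) := by
        rw [Real.div_rpow (by positivity) (by positivity)]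
        field_simp

theorem le_four_mul_mul_div {n N : ℕ} (hn : 0 < n) (hnN : 2 * n ≤ N) :
    N ≤ 4 * n * (N / (2 * n)) := by
  have hlt := Nat.lt_div_mul_add (a := N) (show 0 < 2 * n by omega)
  have hq : 1 ≤ N / (2 * n) := (Nat.one_le_div_iff (by omega)).2 hnN
  nlinarith

theorem card_sub_le_card_sdiff_image {α : Type*} [DecidableEq α] {n : ℕ} (G : Finset α)
    (f : Fin n → α) : #G - n ≤ #(G \ univ.image f) :=
  calc #G - n ≤ #G - #(univ.image f) :=
        Nat.sub_le_sub_left (card_image_le.trans_eq (card_fin n)) _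
    _ ≤ #(G \ univ.image f) := le_card_sdiff _ _

theorem card_mul_le_sum_lpNorm_error_bumpInput {p : ℝ} {n M N : ℕ} (hp : 1 ≤ p) (hn : 0 < n)
    (hnN : 2 * n ≤ N) (π : Fin N → Fin M) (G : Finset (Fin M)) (hG : #G = 2 * n)
    (hfib : ∀ i ∈ G, N / (2 * n) ≤ #{j | π j = i}) (t : Fin n → Fin N)
    (φ : (Fin n → Fin M → ℝ) → Fin M → ℝ) :
    Fintype.card (Finset (Fin M)) * ((n : ℝ) ^ (1 / p - 1) / 8) ≤
      ∑ σ, lpNorm p M ((N : ℝ)⁻¹ • ∑ j, bumpInput π ((M : ℝ) ^ (1 / p)) σ j -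
        φ (fun l => bumpInput π ((M : ℝ) ^ (1 / p)) σ (t l))) := by
  obtain ⟨i₀, -⟩ := card_pos.1 (hG ▸ (by omega : 0 < 2 * n))
  have hH := card_sub_le_card_sdiff_image G (fun l => π (t l))
  rw [hG, show 2 * n - n = n by omega] at hH
  set H := G \ univ.image (fun l => π (t l))
  have herr := card_mul_le_two_mul_sum_lpNorm_error π ((M : ℝ) ^ (1 / p)) hp (by positivity) t φ H
    (fun l => by simp [H]) fun i hi => hfib i (mem_sdiff.1 hi).1
  have harith := rpow_sub_one_div_four_le (zero_lt_one.trans_le hp) hn i₀.pos (by omega) hH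
    (le_four_mul_mul_div hn hnN)
  have hcard : (0 : ℝ) ≤ Fintype.card (Finset (Fin M)) := Nat.cast_nonneg _
  linarith [mul_le_mul_of_nonneg_left harith hcard]

theorem logb_rpow_le_one {p x : ℝ} (hp0 : 0 < p) (hp : p ≤ 2) (hx : 2 ≤ x) :
    Real.logb 2 x ^ (1 - 2 / p) ≤ 1 := by
  refine Real.rpow_le_one_of_one_le_of_nonpos ?_ ?_
  · rw [Real.le_logb_iff_rpow_le one_lt_two (by linarith), Real.rpow_one]; exact hx
  · rw [sub_nonpos, le_div_iff₀ hp0]; linarith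

/-- For every `1 ≤ p < 2` there are constants `c₀, c₁ > 0` such
that for all `n, M, N` with `4 < n ≤ c₀·min(M,N)`, every randomized algorithm using
`n` function values for computing the mean `S_N` on `B_∞^N(L_p^M)` has worst-case
expected error at least `c₁ · n^(−1+1/p) · (log₂ n)^(1−2/p)`: any upper bound `b`
for the expected errors over the unit ball is at least that much. -/
theorem mean_lp_lower_low_log (p : ℝ) (hp1 : 1 ≤ p) (hp2 : p < 2) :
    ∃ c₀ c₁ : ℝ, 0 < c₀ ∧ 0 < c₁ ∧
      ∀ (n M N : ℕ), 4 < n → (n : ℝ) ≤ c₀ * min (M : ℝ) (N : ℝ) →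
        ∀ (Ω : Type) [Fintype Ω] (P : Ω → ℝ),
          (∀ ω, 0 ≤ P ω) → (∑ ω, P ω = 1) →
          ∀ (t : Ω → Fin n → Fin N)
            (φ : Ω → (Fin n → (Fin M → ℝ)) → (Fin M → ℝ)) (b : ℝ),
            (∀ f : Fin N → Fin M → ℝ, (∀ j, lpNorm p M (f j) ≤ 1) →
              ∑ ω, P ω *
                  lpNorm p M
                    ((N : ℝ)⁻¹ • ∑ j, f j - φ ω (fun l => f (t ω l))) ≤ b) →
            c₁ * (n : ℝ) ^ (-1 + 1 / p) * Real.logb 2 n ^ (1 - 2 / p) ≤ b := by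
  refine ⟨1 / 2, 1 / 8, by norm_num, by norm_num, ?_⟩
  intro n M N hn hnMN Ω _ P hP0 hP1 t φ b hb
  have hp0 : 0 < p := by linarith
  have hnM : 2 * n ≤ M := by
    have : 2 * (n : ℝ) ≤ M := by linarith [min_le_left (M : ℝ) N]
    exact_mod_cast this
  have hnN : 2 * n ≤ N := by
    have : 2 * (n : ℝ) ≤ N := by linarith [min_le_right (M : ℝ) N]
    exact_mod_cast this
  obtain ⟨π, G, hG, hfib⟩ := exists_div_le_card_fiber (N := N) (by omega : 0 < 2 * n) hnM
  have hbound : (n : ℝ) ^ (1 / p - 1) / 8 ≤ b :=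
    average_case_le_worst_case P hP0 hP1 _ (fun σ => hb _ (lpNorm_bumpInput_le_one π hp0 σ))
      fun ω => card_mul_le_sum_lpNorm_error_bumpInput hp1 (by omega) hnN π G hG hfib (t ω) (φ ω)
  calc 1 / 8 * (n : ℝ) ^ (-1 + 1 / p) * Real.logb 2 n ^ (1 - 2 / p)
      ≤ 1 / 8 * (n : ℝ) ^ (-1 + 1 / p) * 1 := by
        gcongr
        exact logb_rpow_le_one hp0 hp2.le (by exact_mod_cast (by omega : 2 ≤ n))
    _ = (n : ℝ) ^ (1 / p - 1) / 8 := by ring_nf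
    _ ≤ b := hbound
end
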